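/- arXiv:2007.05737 — 7 statements merged into one kernel-verified Lean document; each statement's English description precedes it below -/
import Mathlib

section
/- Truncated polynomial series bound: Let α > 1 and κ ≥ 1. There exist constants b_l > 0 and b > 0 depending only on α and κ such that: (a) for every σ ∈ (0, κ], b_l · σ^{(α−1)/α} ≤ Σ_{j=1}^∞ min{σ, κ·j^{−α}}; and (b) for every σ > 0, Σ_{j=1}^∞ min{σ, κ·j^{−α}} ≤ b · σ · max{σ^{−1/α}, 1}. -/
/-! With `N = (κ / σ) ^ (1 / α)` one has `σ ≤ κ * n ^ (-α)` exactly when `n ≤ N`, so the series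
is `σ` times the number of terms up to `N`, plus the tail beyond `N`. The first part is about
`N * σ = κ ^ (1 / α) * σ ^ ((α - 1) / α)`, which gives the lower bound. For the upper bound,
the tail beyond `m = ⌈N⌉` is compared with the telescoping sum of `x ^ (1 - α) / (α - 1)`, which
bounds it by `κ * m ^ (1 - α) / (α - 1) ≤ m * σ / (α - 1)`. -/

open Real Finset

lemma tsum_le_of_le_sub_succ {f F : ℕ → ℝ} (hf : Summable f) (hfF : ∀ j, f j ≤ F j - F (j + 1))
    (hF : ∀ j, 0 ≤ F j) : ∑' j, f j ≤ F 0 :=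
  hf.tsum_le_of_sum_range_le fun n =>
    calc ∑ j ∈ range n, f j ≤ ∑ j ∈ range n, (F j - F (j + 1)) := sum_le_sum fun j _ => hfF j
      _ = F 0 - F n := sum_range_sub' F n
      _ ≤ F 0 := sub_le_self _ (hF n)

section MinSeries

variable {g : ℕ → ℝ} {σ : ℝ}

lemma summable_min_of_nonneg (hσ : 0 ≤ σ) (hg0 : ∀ j, 0 ≤ g j) (hg : Summable g) :
    Summable fun j => min σ (g j) :=
  hg.of_nonneg_of_le (fun j => le_min hσ (hg0 j)) fun _ => min_le_right _ _

lemma nat_mul_le_tsum_min (hσ : 0 ≤ σ) (hg0 : ∀ j, 0 ≤ g j) (hg : Summable g) {m : ℕ}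
    (hm : ∀ j < m, σ ≤ g j) : m * σ ≤ ∑' j, min σ (g j) :=
  calc (m : ℝ) * σ = ∑ j ∈ range m, min σ (g j) := by
        rw [sum_congr rfl fun j hj => min_eq_left (hm j (mem_range.1 hj))]
        simp
    _ ≤ ∑' j, min σ (g j) :=
        (summable_min_of_nonneg hσ hg0 hg).sum_le_tsum _ fun j _ => le_min hσ (hg0 j)

lemma tsum_min_le (hσ : 0 ≤ σ) (hg0 : ∀ j, 0 ≤ g j) (hg : Summable g) (m : ℕ) :
    ∑' j, min σ (g j) ≤ m * σ + ∑' j, g (j + m) := by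
  have hmin := summable_min_of_nonneg hσ hg0 hg
  rw [← hmin.sum_add_tsum_nat_add m]
  refine add_le_add ?_ ?_
  · calc ∑ j ∈ range m, min σ (g j) ≤ ∑ _j ∈ range m, σ := sum_le_sum fun j _ => min_le_left _ _
      _ = m * σ := by simp
  · exact ((summable_nat_add_iff m).mpr hmin).tsum_le_tsum (fun j => min_le_right _ _)
      ((summable_nat_add_iff m).mpr hg)

end MinSeries

/-- The tangent-line inequality for the convex function `x ↦ x ^ (1 - α)` at `x + 1`. -/
lemma sub_one_mul_rpow_neg_le {α x : ℝ} (hα : 1 ≤ α) (hx : 0 < x) :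
    (α - 1) * (x + 1) ^ (-α) ≤ x ^ (1 - α) - (x + 1) ^ (1 - α) := by
  have hx1 : 0 < x + 1 := by linarith
  have bernoulli : x + α ≤ x * x ^ (-α) * (x + 1) ^ α := by
    have h := one_add_mul_self_le_rpow_one_add (s := x⁻¹) (by linarith [inv_pos.2 hx]) hα
    rw [show 1 + x⁻¹ = (x + 1) * x⁻¹ by field_simp, mul_rpow hx1.le (inv_nonneg.2 hx.le),
      inv_rpow hx.le, ← rpow_neg hx.le] at h
    calc x + α = x * (1 + α * x⁻¹) := by field_simp
      _ ≤ x * ((x + 1) ^ α * x ^ (-α)) := by gcongr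
      _ = x * x ^ (-α) * (x + 1) ^ α := by ring
  have hinv : (x + 1) ^ α * (x + 1) ^ (-α) = 1 := by
    rw [← rpow_add hx1, add_neg_cancel, rpow_zero]
  have h := mul_le_mul_of_nonneg_right bernoulli (rpow_nonneg hx1.le (-α))
  rw [mul_assoc (x * x ^ (-α)), hinv, mul_one] at h
  rw [sub_eq_add_neg 1 α, rpow_add hx, rpow_add hx1, rpow_one, rpow_one]
  linarith

lemma tsum_rpow_neg_nat_add_le {α : ℝ} (hα : 1 < α) {m : ℕ} (hm : 0 < m) :
    ∑' j : ℕ, ((j + m + 1 : ℕ) : ℝ) ^ (-α) ≤ (m : ℝ) ^ (1 - α) / (α - 1) := by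
  have hα1 : 0 < α - 1 := sub_pos.2 hα
  have hsum : Summable fun j : ℕ => ((j + m + 1 : ℕ) : ℝ) ^ (-α) :=
    (summable_nat_add_iff (m + 1)).mpr (summable_nat_rpow.mpr (by linarith))
  have hstep (j : ℕ) : ((j + m + 1 : ℕ) : ℝ) ^ (-α) ≤
      ((j + m : ℕ) : ℝ) ^ (1 - α) / (α - 1) - ((j + 1 + m : ℕ) : ℝ) ^ (1 - α) / (α - 1) := by
    rw [← sub_div, le_div_iff₀ hα1, mul_comm, show j + 1 + m = j + m + 1 by ring]
    push_cast
    exact sub_one_mul_rpow_neg_le hα.le (by positivity)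
  simpa using tsum_le_of_le_sub_succ hsum hstep fun j => by positivity

section TruncatedSeries

variable {α κ σ : ℝ}

lemma summable_mul_nat_succ_rpow_neg (hα : 1 < α) (κ : ℝ) :
    Summable fun j : ℕ => κ * ((j + 1 : ℕ) : ℝ) ^ (-α) :=
  ((summable_nat_add_iff 1).mpr (summable_nat_rpow.mpr (by linarith))).mul_left κ

lemma le_mul_rpow_neg_iff (hα : 0 < α) (hκ : 0 < κ) (hσ : 0 < σ) {x : ℝ} (hx : 0 < x) :
    σ ≤ κ * x ^ (-α) ↔ x ≤ (κ / σ) ^ α⁻¹ := by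
  rw [le_rpow_inv_iff_of_pos hx.le (by positivity) hα, le_div_iff₀ hσ, rpow_neg hx.le,
    ← div_eq_mul_inv, le_div_iff₀ (by positivity), mul_comm]

lemma mul_rpow_neg_le_iff (hα : 0 < α) (hκ : 0 < κ) (hσ : 0 < σ) {x : ℝ} (hx : 0 < x) :
    κ * x ^ (-α) ≤ σ ↔ (κ / σ) ^ α⁻¹ ≤ x := by
  rw [rpow_inv_le_iff_of_pos (by positivity) hx.le hα, div_le_iff₀ hσ, rpow_neg hx.le,
    ← div_eq_mul_inv, div_le_iff₀ (by positivity), mul_comm]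

lemma div_rpow_inv_mul_div_two_le_tsum_min (hα : 1 < α) (hκ : 0 < κ) (hσ : 0 < σ) (hσκ : σ ≤ κ) :
    (κ / σ) ^ α⁻¹ * σ / 2 ≤ ∑' j : ℕ, min σ (κ * ((j + 1 : ℕ) : ℝ) ^ (-α)) := by
  set N := (κ / σ) ^ α⁻¹
  have hN : 1 ≤ N := one_le_rpow ((one_le_div hσ).2 hσκ) (by positivity)
  set m := ⌊N⌋₊
  have hm : (1 : ℝ) ≤ m := by exact_mod_cast Nat.le_floor (by exact_mod_cast hN)
  have hNm : N / 2 ≤ m := by linarith [Nat.lt_floor_add_one N]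
  have hterm (j : ℕ) (hj : j < m) : σ ≤ κ * ((j + 1 : ℕ) : ℝ) ^ (-α) := by
    refine (le_mul_rpow_neg_iff (by linarith) hκ hσ (by positivity)).2 ?_
    exact le_trans (by exact_mod_cast hj) (Nat.floor_le (by linarith))
  calc N * σ / 2 ≤ m * σ := by nlinarith
    _ ≤ _ := nat_mul_le_tsum_min hσ.le (fun j => by positivity)
        (summable_mul_nat_succ_rpow_neg hα κ) hterm

lemma tsum_min_le_div_rpow_inv_add_one_mul (hα : 1 < α) (hκ : 0 < κ) (hσ : 0 < σ) :
    ∑' j : ℕ, min σ (κ * ((j + 1 : ℕ) : ℝ) ^ (-α)) ≤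
      α / (α - 1) * ((κ / σ) ^ α⁻¹ + 1) * σ := by
  have hα1 : 0 < α - 1 := sub_pos.2 hα
  set N := (κ / σ) ^ α⁻¹
  have hN : 0 < N := by positivity
  set m := ⌈N⌉₊
  have hm : 0 < m := Nat.ceil_pos.2 hN
  have hmN : (m : ℝ) < N + 1 := Nat.ceil_lt_add_one hN.le
  have hlast : κ * (m : ℝ) ^ (1 - α) ≤ m * σ := by
    have h := (mul_rpow_neg_le_iff (by linarith) hκ hσ (by positivity)).2 (Nat.le_ceil N)
    rw [sub_eq_add_neg 1 α, rpow_add (by positivity), rpow_one]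
    nlinarith [(Nat.cast_pos.2 hm : (0 : ℝ) < m)]
  calc _ ≤ m * σ + ∑' j : ℕ, κ * ((j + m + 1 : ℕ) : ℝ) ^ (-α) :=
        tsum_min_le hσ.le (fun j => by positivity) (summable_mul_nat_succ_rpow_neg hα κ) m
    _ = m * σ + κ * ∑' j : ℕ, ((j + m + 1 : ℕ) : ℝ) ^ (-α) := by rw [tsum_mul_left]
    _ ≤ m * σ + κ * ((m : ℝ) ^ (1 - α) / (α - 1)) := by
        gcongr
        exact tsum_rpow_neg_nat_add_le hα hm
    _ ≤ m * σ + m * σ / (α - 1) := by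
        rw [← mul_div_assoc]
        gcongr
    _ = α / (α - 1) * (m * σ) := by field_simp; ring
    _ ≤ α / (α - 1) * ((N + 1) * σ) := by gcongr
    _ = α / (α - 1) * (N + 1) * σ := by ring

end TruncatedSeries

/-- Truncated polynomial series bound: for `α > 1` and `κ ≥ 1` there are constants
`b_l, b > 0` (depending only on `α, κ`) such that
(a) `b_l·σ^{(α−1)/α} ≤ ∑_{j=1}^∞ min{σ, κ·j^{−α}}` for all `σ ∈ (0, κ]`, and
(b) `∑_{j=1}^∞ min{σ, κ·j^{−α}} ≤ b·σ·max{σ^{−1/α}, 1}` for all `σ > 0`. -/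
theorem truncated_polynomial_bound (α κ : ℝ) (hα : 1 < α) (hκ : 1 ≤ κ) :
    ∃ bl b : ℝ, 0 < bl ∧ 0 < b ∧
      (∀ σ : ℝ, 0 < σ → σ ≤ κ →
        bl * σ ^ ((α - 1) / α) ≤ ∑' j : ℕ, min σ (κ * ((j + 1 : ℕ) : ℝ) ^ (-α))) ∧
      (∀ σ : ℝ, 0 < σ →
        (∑' j : ℕ, min σ (κ * ((j + 1 : ℕ) : ℝ) ^ (-α))) ≤
          b * σ * max (σ ^ (-(1 / α))) 1) := by
  have hκ0 : 0 < κ := by linarith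
  have hα1 : 0 < α - 1 := sub_pos.2 hα
  have hsplit {σ : ℝ} (hσ : 0 < σ) : (κ / σ) ^ α⁻¹ = κ ^ α⁻¹ * σ ^ (-(1 / α)) := by
    rw [div_rpow hκ0.le hσ.le, rpow_neg hσ.le, one_div, div_eq_mul_inv]
  refine ⟨κ ^ α⁻¹ / 2, α / (α - 1) * (κ ^ α⁻¹ + 1), by positivity, by positivity,
    fun σ hσ hσκ => ?_, fun σ hσ => ?_⟩
  · calc κ ^ α⁻¹ / 2 * σ ^ ((α - 1) / α) = (κ / σ) ^ α⁻¹ * σ / 2 := by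
          rw [hsplit hσ, show (α - 1) / α = -(1 / α) + 1 by field_simp; ring, rpow_add hσ, rpow_one]
          ring
      _ ≤ _ := div_rpow_inv_mul_div_two_le_tsum_min hα hκ0 hσ hσκ
  · have hmax := le_max_left (σ ^ (-(1 / α))) 1
    have hone := le_max_right (σ ^ (-(1 / α))) 1
    calc _ ≤ α / (α - 1) * ((κ / σ) ^ α⁻¹ + 1) * σ :=
          tsum_min_le_div_rpow_inv_add_one_mul hα hκ0 hσ
      _ ≤ α / (α - 1) * (κ ^ α⁻¹ * max (σ ^ (-(1 / α))) 1 + max (σ ^ (-(1 / α))) 1) * σ := by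
          rw [hsplit hσ]
          gcongr
      _ = _ := by ring
end

section
/- Values of q* and r under polynomial decay: Let Δ(j) = κ·j^{−α} for j ≥ 1 with κ > 0 and α > 1. There exist constants 0 < c ≤ C depending only on α and κ such that for all x > 0: c·max{x^{−1/α}, 1} ≤ q*(x) ≤ C·max{x^{−1/α}, 1}, and there exist constants 0 < c' ≤ C' depending only on α and κ such that for all δ > 0: c'·min{δ^{α/(α−1)}, δ} ≤ r(δ) ≤ C'·min{δ^{α/(α−1)}, δ}. -/
/-!
Comparing the tail `∑_{j ≥ q} j^{-α}` with `∫_q^∞ t^{-α} dt` gives `β(q) ≍ q^{1-α}`, so the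
condition `β(q) ≤ q x` defining `q*(x)` holds exactly when `q ≳ x^{-1/α}` up to constants; since
also `q ≥ 1`, this gives `q*(x) ≍ max(x^{-1/α}, 1)`. Consequently `q*(r) r ≍ max(r^{(α-1)/α}, r)`,
an increasing function of `r` whose inverse is `δ ↦ min(δ^{α/(α-1)}, δ)`, and the supremum
`r(δ)` of the admissible `r` is comparable to that inverse.
-/

/-- `β(q) = ∑_{j=q}^∞ Δ(j)`. -/
noncomputable def betaFn (Δ : ℕ → ℝ) (q : ℕ) : ℝ := ∑' j : ℕ, Δ (j + q)

/-- `q*(x) = min{q ∈ ℕ, q ≥ 1 : β(q) ≤ q·x}`. -/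
noncomputable def qstar (Δ : ℕ → ℝ) (x : ℝ) : ℕ :=
  sInf {q : ℕ | 1 ≤ q ∧ betaFn Δ q ≤ (q : ℝ) * x}

/-- `r(δ) = max{r > 0 : q*(r)·r ≤ δ}`. -/
noncomputable def rFn (Δ : ℕ → ℝ) (δ : ℝ) : ℝ :=
  sSup {r : ℝ | 0 < r ∧ (qstar Δ r : ℝ) * r ≤ δ}

open Real

lemma tsum_rpow_neg_tail_le {α q : ℝ} (hα : 1 < α) (hq : 0 < q) :
    ∑' j : ℕ, (q + ↑(j + 1)) ^ (-α) ≤ q ^ (1 - α) / (α - 1) := by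
  refine tsum_le_of_sum_range_le (fun j => by positivity) fun n => ?_
  have hanti : AntitoneOn (fun x : ℝ => x ^ (-α)) (Set.Icc q (q + n)) :=
    fun x hx y _ hxy => rpow_le_rpow_of_nonpos (hq.trans_le hx.1) hxy (by linarith)
  have hzero : (0 : ℝ) ∉ Set.uIcc q (q + n) := by
    rw [Set.uIcc_of_le (le_add_of_nonneg_right n.cast_nonneg)]; exact fun h => hq.not_ge h.1
  calc ∑ j ∈ Finset.range n, (q + ↑(j + 1)) ^ (-α)
      ≤ ∫ x in q..q + n, x ^ (-α) := hanti.sum_le_integral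
    _ = (q ^ (1 - α) - (q + n) ^ (1 - α)) / (α - 1) := by
      rw [integral_rpow (Or.inr ⟨by linarith, hzero⟩), neg_add_eq_sub, ← neg_sub α 1,
        div_neg, ← neg_div, neg_sub]
    _ ≤ q ^ (1 - α) / (α - 1) :=
      div_le_div_of_nonneg_right (sub_le_self _ (by positivity)) (by linarith)

lemma summable_rpow_neg_shift {α : ℝ} (hα : 1 < α) (κ : ℝ) (q : ℕ) :
    Summable (fun j : ℕ => κ * ((j + q : ℕ) : ℝ) ^ (-α)) :=
  ((summable_nat_rpow.mpr (by linarith)).mul_left κ).comp_injective (add_left_injective q)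

lemma betaFn_rpow_le {κ α : ℝ} (hκ : 0 ≤ κ) (hα : 1 < α) {q : ℕ} (hq : 1 ≤ q) :
    betaFn (fun j => κ * (j : ℝ) ^ (-α)) q ≤ κ * α / (α - 1) * (q : ℝ) ^ (1 - α) := by
  have hq0 : (0 : ℝ) < q := by exact_mod_cast hq
  have hsplit : betaFn (fun j => κ * (j : ℝ) ^ (-α)) q
      = κ * (q : ℝ) ^ (-α) + κ * ∑' j : ℕ, ((q : ℝ) + ↑(j + 1)) ^ (-α) := by
    rw [betaFn, (summable_rpow_neg_shift hα κ q).tsum_eq_zero_add, ← tsum_mul_left]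
    congr 1
    · simp
    · exact tsum_congr fun j => by push_cast; ring_nf
  have hhead : (q : ℝ) ^ (-α) ≤ (q : ℝ) ^ (1 - α) :=
    rpow_le_rpow_of_exponent_le (by exact_mod_cast hq) (by linarith)
  calc betaFn (fun j => κ * (j : ℝ) ^ (-α)) q
      ≤ κ * (q : ℝ) ^ (1 - α) + κ * ((q : ℝ) ^ (1 - α) / (α - 1)) := by
        rw [hsplit]
        exact add_le_add (mul_le_mul_of_nonneg_left hhead hκ)
          (mul_le_mul_of_nonneg_left (tsum_rpow_neg_tail_le hα hq0) hκ)
    _ = κ * α / (α - 1) * (q : ℝ) ^ (1 - α) := by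
        field_simp [(by linarith : α - 1 ≠ 0)]
        ring

lemma le_betaFn_rpow {κ α : ℝ} (hκ : 0 ≤ κ) (hα : 1 < α) {q : ℕ} (hq : 1 ≤ q) :
    κ * 2 ^ (-α) * (q : ℝ) ^ (1 - α) ≤ betaFn (fun j => κ * (j : ℝ) ^ (-α)) q := by
  have hq0 : (0 : ℝ) < q := by exact_mod_cast hq
  calc κ * 2 ^ (-α) * (q : ℝ) ^ (1 - α) = ∑ _j ∈ Finset.range q, κ * (2 * (q : ℝ)) ^ (-α) := by
        rw [Finset.sum_const, Finset.card_range, nsmul_eq_mul, mul_rpow zero_le_two hq0.le,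
          sub_eq_add_neg, rpow_add hq0, rpow_one]
        ring
    _ ≤ ∑ j ∈ Finset.range q, κ * ((j + q : ℕ) : ℝ) ^ (-α) := by
        refine Finset.sum_le_sum fun j hj => mul_le_mul_of_nonneg_left ?_ hκ
        have hjq : j + q ≤ 2 * q := by have := Finset.mem_range.mp hj; omega
        exact rpow_le_rpow_of_nonpos (by positivity) (by exact_mod_cast hjq) (by linarith)
    _ ≤ betaFn (fun j => κ * (j : ℝ) ^ (-α)) q :=
        (summable_rpow_neg_shift hα κ q).sum_le_tsum _ fun j _ => by positivity

lemma mul_rpow_one_sub_le_mul_iff {a q x α : ℝ} (ha : 0 ≤ a) (hq : 0 < q) (hx : 0 < x)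
    (hα : 0 < α) : a * q ^ (1 - α) ≤ q * x ↔ a ^ α⁻¹ * x ^ (-(1 / α)) ≤ q := by
  have hqx : q * x = q ^ α * x * q ^ (1 - α) := by
    rw [mul_right_comm, ← rpow_add hq, add_sub_cancel, rpow_one]
  rw [hqx, mul_le_mul_iff_left₀ (rpow_pos_of_pos hq _), ← div_le_iff₀ hx,
    ← rpow_inv_le_iff_of_pos (by positivity) hq.le hα, div_rpow ha hx.le, rpow_neg hx.le,
    one_div, div_eq_mul_inv]

section qstar

variable {Δ : ℕ → ℝ} {α x : ℝ}

lemma exists_betaFn_le_mul {A : ℝ} (hA : 0 ≤ A) (hα : 0 < α) (hx : 0 < x)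
    (hβ : ∀ q : ℕ, 1 ≤ q → betaFn Δ q ≤ A * (q : ℝ) ^ (1 - α)) :
    ∃ q : ℕ, (1 ≤ q ∧ betaFn Δ q ≤ q * x) ∧ (q : ℝ) ≤ A ^ α⁻¹ * x ^ (-(1 / α)) + 1 := by
  set t := A ^ α⁻¹ * x ^ (-(1 / α))
  have ht : 0 ≤ t := by positivity
  refine ⟨⌊t⌋₊ + 1, ⟨Nat.le_add_left 1 _, (hβ _ (Nat.le_add_left 1 _)).trans ?_⟩, ?_⟩
  · exact (mul_rpow_one_sub_le_mul_iff hA (by positivity) hx hα).2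
      (by exact_mod_cast (Nat.lt_floor_add_one t).le)
  · push_cast
    linarith [Nat.floor_le ht]

lemma qstar_le_of_betaFn_le {A : ℝ} (hA : 0 ≤ A) (hα : 0 < α) (hx : 0 < x)
    (hβ : ∀ q : ℕ, 1 ≤ q → betaFn Δ q ≤ A * (q : ℝ) ^ (1 - α)) :
    (qstar Δ x : ℝ) ≤ (A ^ α⁻¹ + 1) * max (x ^ (-(1 / α))) 1 := by
  obtain ⟨q, hq, hqle⟩ := exists_betaFn_le_mul hA hα hx hβ
  have hA' : 0 ≤ A ^ α⁻¹ := by positivity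
  calc (qstar Δ x : ℝ) ≤ q := by exact_mod_cast Nat.sInf_le hq
    _ ≤ A ^ α⁻¹ * x ^ (-(1 / α)) + 1 := hqle
    _ ≤ (A ^ α⁻¹ + 1) * max (x ^ (-(1 / α))) 1 := by
      nlinarith [le_max_left (x ^ (-(1 / α))) 1, le_max_right (x ^ (-(1 / α))) 1]

lemma le_qstar_of_le_betaFn {a : ℝ} (ha : 0 ≤ a) (hα : 0 < α) (hx : 0 < x)
    (hne : {q : ℕ | 1 ≤ q ∧ betaFn Δ q ≤ q * x}.Nonempty)
    (hβ : ∀ q : ℕ, 1 ≤ q → a * (q : ℝ) ^ (1 - α) ≤ betaFn Δ q) :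
    min (a ^ α⁻¹) 1 * max (x ^ (-(1 / α))) 1 ≤ qstar Δ x := by
  obtain ⟨hq, hqβ⟩ : 1 ≤ qstar Δ x ∧ betaFn Δ (qstar Δ x) ≤ qstar Δ x * x := Nat.sInf_mem hne
  have hq' : (1 : ℝ) ≤ qstar Δ x := by exact_mod_cast hq
  have hpow : a ^ α⁻¹ * x ^ (-(1 / α)) ≤ qstar Δ x :=
    (mul_rpow_one_sub_le_mul_iff ha (by positivity) hx hα).1 ((hβ _ hq).trans hqβ)
  rcases le_total (x ^ (-(1 / α))) 1 with hs | hs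
  · rw [max_eq_right hs, mul_one]
    exact (min_le_right _ _).trans hq'
  · rw [max_eq_left hs]
    exact (mul_le_mul_of_nonneg_right (min_le_left _ _) (by positivity)).trans hpow

end qstar

lemma max_rpow_le_iff {γ r δ : ℝ} (hγ : 0 < γ) (hr : 0 ≤ r) (hδ : 0 ≤ δ) :
    max (r ^ γ) r ≤ δ ↔ r ≤ min (δ ^ γ⁻¹) δ := by
  rw [max_le_iff, le_min_iff, le_rpow_inv_iff_of_pos hr hδ hγ]

lemma max_rpow_neg_inv_one_mul {α r : ℝ} (hα : α ≠ 0) (hr : 0 < r) :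
    max (r ^ (-(1 / α))) 1 * r = max (r ^ ((α - 1) / α)) r := by
  rw [max_mul_of_nonneg _ _ hr.le, one_mul, ← rpow_add_one hr.ne']
  congr 2
  field_simp
  ring

lemma min_mul_min_le_min_mul_mul {a b x y : ℝ} (ha : 0 ≤ a) (hb : 0 ≤ b) (hxy : 0 ≤ min x y) :
    min a b * min x y ≤ min (a * x) (b * y) :=
  le_min (mul_le_mul (min_le_left _ _) (min_le_left _ _) hxy ha)
    (mul_le_mul (min_le_right _ _) (min_le_right _ _) hxy hb)

lemma min_mul_mul_le_max_mul_min {a b x y : ℝ} (hx : 0 ≤ x) (hy : 0 ≤ y) :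
    min (a * x) (b * y) ≤ max a b * min x y := by
  rcases le_total x y with h | h
  · rw [min_eq_left h]
    exact (min_le_left _ _).trans (mul_le_mul_of_nonneg_right (le_max_left _ _) hx)
  · rw [min_eq_right h]
    exact (min_le_right _ _).trans (mul_le_mul_of_nonneg_right (le_max_right _ _) hy)

-- `rFn Δ δ` is `sSup (rSet (qstar Δ ·) δ)` by definition.
def rSet (g : ℝ → ℝ) (δ : ℝ) : Set ℝ := {r | 0 < r ∧ g r * r ≤ δ}

section rSet

variable {g : ℝ → ℝ} {α δ : ℝ}

lemma le_of_mem_rSet {c : ℝ} (hα : 1 < α) (hc : 0 < c)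
    (hg : ∀ r, 0 < r → c * max (r ^ (-(1 / α))) 1 ≤ g r) {r : ℝ} (hr : r ∈ rSet g δ) :
    r ≤ max (c⁻¹ ^ (α / (α - 1))) c⁻¹ * min (δ ^ (α / (α - 1))) δ := by
  obtain ⟨hr0, hrδ⟩ := hr
  have hγ : 0 < (α - 1) / α := div_pos (by linarith) (by linarith)
  have hφ : max (r ^ ((α - 1) / α)) r ≤ c⁻¹ * δ := by
    rw [← max_rpow_neg_inv_one_mul (by positivity) hr0, le_inv_mul_iff₀ hc, ← mul_assoc]
    exact (mul_le_mul_of_nonneg_right (hg r hr0) hr0.le).trans hrδ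
  have hδ : 0 ≤ δ := nonneg_of_mul_nonneg_right
    (hr0.le.trans ((le_max_right _ _).trans hφ)) (inv_pos.2 hc)
  have hr := (max_rpow_le_iff hγ hr0.le (by positivity)).1 hφ
  rw [inv_div, mul_rpow (by positivity) hδ] at hr
  exact hr.trans (min_mul_mul_le_max_mul_min (by positivity) hδ)

lemma exists_mem_rSet_ge {C : ℝ} (hα : 1 < α) (hC : 0 < C)
    (hg : ∀ r, 0 < r → g r ≤ C * max (r ^ (-(1 / α))) 1) (hδ : 0 < δ) :
    ∃ r ∈ rSet g δ, min (C⁻¹ ^ (α / (α - 1))) C⁻¹ * min (δ ^ (α / (α - 1))) δ ≤ r := by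
  have hγ : 0 < (α - 1) / α := div_pos (by linarith) (by linarith)
  set r := min ((C⁻¹ * δ) ^ (α / (α - 1))) (C⁻¹ * δ) with hr
  have hr0 : 0 < r := by positivity
  have hφ : max (r ^ ((α - 1) / α)) r ≤ C⁻¹ * δ :=
    (max_rpow_le_iff hγ hr0.le (by positivity)).2 (by rw [inv_div])
  refine ⟨r, ⟨hr0, ?_⟩, ?_⟩
  · calc g r * r ≤ C * max (r ^ (-(1 / α))) 1 * r := mul_le_mul_of_nonneg_right (hg r hr0) hr0.le
      _ = C * max (r ^ ((α - 1) / α)) r := by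
        rw [mul_assoc, max_rpow_neg_inv_one_mul (by positivity) hr0]
      _ ≤ C * (C⁻¹ * δ) := by gcongr
      _ = δ := by field_simp
  · rw [hr, mul_rpow (by positivity) hδ.le]
    exact min_mul_min_le_min_mul_mul (by positivity) (by positivity) (by positivity)

lemma sSup_rSet_le {c : ℝ} (hα : 1 < α) (hc : 0 < c)
    (hg : ∀ r, 0 < r → c * max (r ^ (-(1 / α))) 1 ≤ g r) (hδ : 0 ≤ δ) :
    sSup (rSet g δ) ≤ max (c⁻¹ ^ (α / (α - 1))) c⁻¹ * min (δ ^ (α / (α - 1))) δ :=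
  Real.sSup_le (fun _ hr => le_of_mem_rSet hα hc hg hr) (by positivity)

lemma le_sSup_rSet {c C : ℝ} (hα : 1 < α) (hc : 0 < c) (hC : 0 < C)
    (hgc : ∀ r, 0 < r → c * max (r ^ (-(1 / α))) 1 ≤ g r)
    (hgC : ∀ r, 0 < r → g r ≤ C * max (r ^ (-(1 / α))) 1) (hδ : 0 < δ) :
    min (C⁻¹ ^ (α / (α - 1))) C⁻¹ * min (δ ^ (α / (α - 1))) δ ≤ sSup (rSet g δ) := by
  obtain ⟨r, hr, hle⟩ := exists_mem_rSet_ge hα hC hgC hδ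
  exact hle.trans (le_csSup ⟨_, fun _ h => le_of_mem_rSet hα hc hgc h⟩ hr)

end rSet

/-- Values of `q*` and `r` under polynomial decay `Δ(j) = κ·j^{−α}` (`κ > 0`, `α > 1`):
`q*(x) ≍ max{x^{−1/α}, 1}` and `r(δ) ≍ min{δ^{α/(α−1)}, δ}` with constants only
depending on `α` and `κ`. -/
theorem qstar_r_polynomial_decay (κ α : ℝ) (hκ : 0 < κ) (hα : 1 < α) :
    (∃ c C : ℝ, 0 < c ∧ c ≤ C ∧ ∀ x : ℝ, 0 < x →
      c * max (x ^ (-(1 / α))) 1 ≤ (qstar (fun j => κ * (j : ℝ) ^ (-α)) x : ℝ) ∧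
      (qstar (fun j => κ * (j : ℝ) ^ (-α)) x : ℝ) ≤ C * max (x ^ (-(1 / α))) 1) ∧
    (∃ c' C' : ℝ, 0 < c' ∧ c' ≤ C' ∧ ∀ δ : ℝ, 0 < δ →
      c' * min (δ ^ (α / (α - 1))) δ ≤ rFn (fun j => κ * (j : ℝ) ^ (-α)) δ ∧
      rFn (fun j => κ * (j : ℝ) ^ (-α)) δ ≤ C' * min (δ ^ (α / (α - 1))) δ) := by
  set Δ : ℕ → ℝ := fun j => κ * (j : ℝ) ^ (-α)
  have hα0 : 0 < α := by linarith
  have hA : 0 ≤ κ * α / (α - 1) := div_nonneg (by positivity) (by linarith)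
  set c := min ((κ * 2 ^ (-α)) ^ α⁻¹) 1
  set C := (κ * α / (α - 1)) ^ α⁻¹ + 1
  have hc : 0 < c := by positivity
  have hC : 0 < C := by positivity
  have hq : ∀ x, 0 < x → c * max (x ^ (-(1 / α))) 1 ≤ (qstar Δ x : ℝ) ∧
      (qstar Δ x : ℝ) ≤ C * max (x ^ (-(1 / α))) 1 := by
    intro x hx
    have hupper := fun q (hq : 1 ≤ q) => betaFn_rpow_le hκ.le hα hq
    obtain ⟨q, hqS, -⟩ := exists_betaFn_le_mul hA hα0 hx hupper
    exact ⟨le_qstar_of_le_betaFn (by positivity) hα0 hx ⟨q, hqS⟩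
        fun q hq => le_betaFn_rpow hκ.le hα hq,
      qstar_le_of_betaFn_le hA hα0 hx hupper⟩
  have hr : ∀ δ, 0 < δ →
      min (C⁻¹ ^ (α / (α - 1))) C⁻¹ * min (δ ^ (α / (α - 1))) δ ≤ rFn Δ δ ∧
      rFn Δ δ ≤ max (c⁻¹ ^ (α / (α - 1))) c⁻¹ * min (δ ^ (α / (α - 1))) δ := fun δ hδ =>
    ⟨le_sSup_rSet hα hc hC (fun r hr => (hq r hr).1) (fun r hr => (hq r hr).2) hδ,
      sSup_rSet_le hα hc (fun r hr => (hq r hr).1) hδ.le⟩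
  refine ⟨⟨c, C, hc, ?_, hq⟩, ⟨_, _, by positivity, ?_, hr⟩⟩
  · exact le_of_mul_le_mul_right ((hq 1 one_pos).1.trans (hq 1 one_pos).2) (by positivity)
  · exact le_of_mul_le_mul_right ((hr 1 one_pos).1.trans (hr 1 one_pos).2) (by positivity)
end

section
/- Values of q* and r under geometric decay: Let Δ(j) = κ·ρ^j for j ≥ 1 with κ > 0 and ρ ∈ (0,1). There exist constants 0 < c ≤ C depending only on ρ and κ such that for all x > 0: c·max{log(x^{−1}), 1} ≤ q*(x) ≤ C·max{log(x^{−1}), 1}, and there exist constants 0 < c' ≤ C' depending only on ρ and κ such that for all δ > 0: c'·δ/log(max{δ^{−1}, e}) ≤ r(δ) ≤ C'·δ/log(max{δ^{−1}, e}). -/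
open Filter Topology

noncomputable def logScale (x : ℝ) : ℝ := max (Real.log x⁻¹) 1

lemma one_le_logScale (x : ℝ) : 1 ≤ logScale x := le_max_right _ _

lemma logScale_pos (x : ℝ) : 0 < logScale x := one_pos.trans_le (one_le_logScale x)

lemma log_inv_le_logScale (x : ℝ) : Real.log x⁻¹ ≤ logScale x := le_max_left _ _

lemma logScale_anti {x y : ℝ} (hx : 0 < x) (hxy : x ≤ y) : logScale y ≤ logScale x :=
  max_le_max (Real.log_le_log (inv_pos.mpr (hx.trans_le hxy)) (inv_anti₀ hx hxy)) le_rfl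

lemma logScale_mul_le {x y : ℝ} (hx : 0 < x) (hy : 0 < y) :
    logScale (x * y) ≤ logScale x + logScale y := by
  have hlog : Real.log (x * y)⁻¹ = Real.log x⁻¹ + Real.log y⁻¹ := by
    rw [mul_inv, Real.log_mul (by positivity) (by positivity)]
  refine max_le ?_ ?_
  · linarith [log_inv_le_logScale x, log_inv_le_logScale y]
  · linarith [one_le_logScale x, logScale_pos y]

lemma logScale_inv_le_self {L : ℝ} (hL : 1 ≤ L) : logScale L⁻¹ ≤ L := by
  rw [logScale, inv_inv]
  exact max_le (Real.log_le_self (by linarith)) hL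

lemma log_max_inv_exp_one {x : ℝ} (hx : 0 < x) :
    Real.log (max x⁻¹ (Real.exp 1)) = logScale x := by
  rw [Real.strictMonoOn_log.monotoneOn.map_max (by simp [hx]) (by simp [Real.exp_pos]),
    Real.log_exp, logScale]

lemma tendsto_logScale_mul_nhdsGT_zero :
    Tendsto (fun x => logScale x * x) (𝓝[>] 0) (𝓝 0) := by
  have hcont : Tendsto (fun x => max (Real.negMulLog x) x) (𝓝[>] 0) (𝓝 0) := by
    simpa using ((Real.continuous_negMulLog.max continuous_id).tendsto 0).mono_left
      nhdsWithin_le_nhds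
  refine hcont.congr' (eventually_nhdsWithin_of_forall fun x (hx : 0 < x) => ?_)
  show max (Real.negMulLog x) x = logScale x * x
  rw [logScale, max_mul_of_nonneg _ _ hx.le, Real.negMulLog, Real.log_inv, one_mul]
  ring_nf

lemma exists_pos_mul_logScale_add_two_le (C : ℝ) :
    ∃ ε > 0, C * (logScale ε + 2) * ε ≤ 1 := by
  have hlim : Tendsto (fun x => C * (logScale x * x + 2 * x)) (𝓝[>] 0) (𝓝 0) := by
    have h2 : Tendsto (fun x : ℝ => 2 * x) (𝓝[>] 0) (𝓝 0) := by
      simpa using ((continuous_const_mul (2 : ℝ)).tendsto 0).mono_left nhdsWithin_le_nhds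
    simpa using (tendsto_logScale_mul_nhdsGT_zero.add h2).const_mul C
  obtain ⟨ε, hε1, hε0⟩ := ((hlim.eventually_lt_const one_pos).and self_mem_nhdsWithin).exists
  exact ⟨ε, hε0, by linarith [show C * (logScale ε + 2) * ε = C * (logScale ε * ε + 2 * ε) by ring]⟩

section General

variable {Δ : ℕ → ℝ}

lemma qstar_le {x : ℝ} {q : ℕ} (hq : 1 ≤ q) (hβ : betaFn Δ q ≤ q * x) : qstar Δ x ≤ q :=
  Nat.sInf_le ⟨hq, hβ⟩

lemma qstar_spec {x : ℝ} {q : ℕ} (hq : 1 ≤ q) (hβ : betaFn Δ q ≤ q * x) :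
    1 ≤ qstar Δ x ∧ betaFn Δ (qstar Δ x) ≤ qstar Δ x * x :=
  Nat.sInf_mem (s := {q : ℕ | 1 ≤ q ∧ betaFn Δ q ≤ q * x}) ⟨q, hq, hβ⟩

lemma le_rFn {δ r : ℝ} (hq : ∀ x > 0, 1 ≤ (qstar Δ x : ℝ)) (hr : 0 < r)
    (hrδ : qstar Δ r * r ≤ δ) : r ≤ rFn Δ δ := by
  refine le_csSup ⟨δ, ?_⟩ ⟨hr, hrδ⟩
  rintro s ⟨hs, hsδ⟩
  nlinarith [hq s hs]

lemma rFn_le_of_le_qstar {c δ : ℝ} (hc : 0 < c)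
    (hlo : ∀ x > 0, c * logScale x ≤ qstar Δ x) (hδ : 0 < δ) :
    rFn Δ δ ≤ c⁻¹ * (δ / logScale δ) := by
  have hL := logScale_pos δ
  refine Real.sSup_le (fun r ⟨hr, hrδ⟩ => ?_) (by positivity)
  have hq : 1 ≤ (qstar Δ r : ℝ) := by
    have : (0 : ℝ) < qstar Δ r := (mul_pos hc (logScale_pos r)).trans_le (hlo r hr)
    exact_mod_cast Nat.one_le_iff_ne_zero.mpr (by exact_mod_cast this.ne')
  have hscale : logScale δ ≤ logScale r := logScale_anti hr (by nlinarith)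
  rw [le_inv_mul_iff₀ hc, le_div_iff₀ hL]
  calc c * r * logScale δ ≤ c * logScale r * r := by
        rw [mul_right_comm]; gcongr
    _ ≤ qstar Δ r * r := by gcongr; exact hlo r hr
    _ ≤ δ := hrδ

/-- The test point is `r = ε δ / log(1/δ)`: then `log(1/r) ≤ log(1/ε) + 2 log(1/δ)`, and
`ε` is chosen so small that `ε (log(1/ε) + 2)` beats the constant `C`. -/
lemma exists_le_rFn_of_qstar_le {C : ℝ} (hq : ∀ x > 0, 1 ≤ (qstar Δ x : ℝ))
    (hup : ∀ x > 0, qstar Δ x ≤ C * logScale x) :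
    ∃ ε > 0, ∀ δ > 0, ε * (δ / logScale δ) ≤ rFn Δ δ := by
  obtain ⟨ε, hε, hεC⟩ := exists_pos_mul_logScale_add_two_le C
  have hC : 0 ≤ C := by nlinarith [hq 1 one_pos, hup 1 one_pos, logScale_pos 1]
  refine ⟨ε, hε, fun δ hδ => ?_⟩
  set L := logScale δ
  have hL : 1 ≤ L := one_le_logScale δ
  refine le_rFn hq (by positivity) ?_
  have hscale : logScale (ε * (δ / L)) ≤ (logScale ε + 2) * L := by
    calc logScale (ε * (δ / L)) ≤ logScale ε + (logScale δ + logScale L⁻¹) := by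
          rw [div_eq_mul_inv]
          refine (logScale_mul_le hε (by positivity)).trans (add_le_add_right ?_ _)
          exact logScale_mul_le hδ (by positivity)
      _ ≤ logScale ε + 2 * L := by linarith [logScale_inv_le_self hL]
      _ ≤ (logScale ε + 2) * L := by nlinarith [one_le_logScale ε]
  calc qstar Δ (ε * (δ / L)) * (ε * (δ / L)) ≤ C * ((logScale ε + 2) * L) * (ε * (δ / L)) := by
        gcongr
        exact (hup _ (by positivity)).trans (by gcongr)
    _ = C * (logScale ε + 2) * ε * δ := by field_simp
    _ ≤ δ := by nlinarith

end General

section Geometric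

variable {κ ρ : ℝ}

lemma betaFn_geometric (hρ0 : 0 ≤ ρ) (hρ1 : ρ < 1) (q : ℕ) :
    betaFn (fun j => κ * ρ ^ j) q = κ / (1 - ρ) * ρ ^ q := by
  simp_rw [betaFn, pow_add, ← mul_assoc]
  rw [tsum_mul_right, tsum_mul_left, tsum_geometric_of_lt_one hρ0 hρ1, div_eq_mul_inv]

lemma log_mul_pow {A : ℝ} (hA : 0 < A) (hρ : 0 < ρ) (q : ℕ) :
    Real.log (A * ρ ^ q) = Real.log A - q * Real.log ρ⁻¹ := by
  rw [Real.log_mul hA.ne' (by positivity), Real.log_pow, Real.log_inv]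
  ring

lemma exists_betaFn_geometric_le (hκ : 0 < κ) (hρ0 : 0 < ρ) (hρ1 : ρ < 1) {x : ℝ} (hx : 0 < x) :
    ∃ q : ℕ, 1 ≤ q ∧ betaFn (fun j => κ * ρ ^ j) q ≤ q * x ∧
      (q : ℝ) ≤ ((|Real.log (κ / (1 - ρ))| + 1) / Real.log ρ⁻¹ + 1) * logScale x := by
  set A := κ / (1 - ρ)
  have hA : 0 < A := div_pos hκ (by linarith)
  have hlogρ : 0 < Real.log ρ⁻¹ := Real.log_pos ((one_lt_inv₀ hρ0).mpr hρ1)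
  set a := (|Real.log A| + 1) / Real.log ρ⁻¹
  have hM := one_le_logScale x
  have ha : 0 < a := by positivity
  set q := ⌈a * logScale x⌉₊
  have hq : a * logScale x ≤ q := Nat.le_ceil _
  have hq1 : 1 ≤ q := Nat.one_le_iff_ne_zero.mpr (Nat.ceil_pos.mpr (by positivity)).ne'
  have hdecay : A * ρ ^ q ≤ x := by
    rw [← Real.log_le_log_iff (by positivity) hx, log_mul_pow hA hρ0]
    have hqlog : (|Real.log A| + 1) * logScale x ≤ q * Real.log ρ⁻¹ := by
      calc (|Real.log A| + 1) * logScale x = a * logScale x * Real.log ρ⁻¹ := by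
            rw [mul_right_comm, div_mul_cancel₀ _ hlogρ.ne']
        _ ≤ q * Real.log ρ⁻¹ := by gcongr
    have hlogx := log_inv_le_logScale x
    rw [Real.log_inv] at hlogx
    nlinarith [le_abs_self (Real.log A), abs_nonneg (Real.log A)]
  refine ⟨q, hq1, ?_, ?_⟩
  · rw [betaFn_geometric hρ0.le hρ1]
    nlinarith [(Nat.one_le_cast (α := ℝ)).mpr hq1]
  · nlinarith [Nat.ceil_lt_add_one (by positivity : 0 ≤ a * logScale x)]

lemma qstar_geometric_le (hκ : 0 < κ) (hρ0 : 0 < ρ) (hρ1 : ρ < 1) {x : ℝ} (hx : 0 < x) :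
    (qstar (fun j => κ * ρ ^ j) x : ℝ) ≤
      ((|Real.log (κ / (1 - ρ))| + 1) / Real.log ρ⁻¹ + 1) * logScale x := by
  obtain ⟨q, hq1, hβ, hq⟩ := exists_betaFn_geometric_le hκ hρ0 hρ1 hx
  exact (Nat.cast_le.mpr (qstar_le hq1 hβ)).trans hq

lemma qstar_geometric_spec (hκ : 0 < κ) (hρ0 : 0 < ρ) (hρ1 : ρ < 1) {x : ℝ} (hx : 0 < x) :
    1 ≤ qstar (fun j => κ * ρ ^ j) x ∧
      κ / (1 - ρ) * ρ ^ qstar (fun j => κ * ρ ^ j) x ≤ qstar (fun j => κ * ρ ^ j) x * x := by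
  obtain ⟨q, hq1, hβ, -⟩ := exists_betaFn_geometric_le hκ hρ0 hρ1 hx
  rw [← betaFn_geometric hρ0.le hρ1]
  exact qstar_spec hq1 hβ

lemma le_qstar_geometric (hκ : 0 < κ) (hρ0 : 0 < ρ) (hρ1 : ρ < 1) {x : ℝ} (hx : 0 < x) :
    (Real.log ρ⁻¹ + |Real.log (κ / (1 - ρ))| + 1)⁻¹ * logScale x ≤
      qstar (fun j => κ * ρ ^ j) x := by
  set A := κ / (1 - ρ)
  have hA : 0 < A := div_pos hκ (by linarith)
  have hlogρ : 0 < Real.log ρ⁻¹ := Real.log_pos ((one_lt_inv₀ hρ0).mpr hρ1)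
  obtain ⟨hq1, hβ⟩ := qstar_geometric_spec hκ hρ0 hρ1 hx
  set q := qstar (fun j => κ * ρ ^ j) x
  have hq : (1 : ℝ) ≤ q := Nat.one_le_cast.mpr hq1
  have hlog : Real.log A - q * Real.log ρ⁻¹ ≤ Real.log q + Real.log x := by
    rw [← log_mul_pow hA hρ0, ← Real.log_mul (by positivity) hx.ne']
    exact Real.log_le_log (by positivity) hβ
  have hlogq : Real.log q ≤ q := Real.log_le_self (by positivity)
  rw [inv_mul_le_iff₀ (by positivity), logScale, Real.log_inv]
  refine max_le ?_ (by nlinarith [abs_nonneg (Real.log A)])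
  nlinarith [neg_abs_le (Real.log A), abs_nonneg (Real.log A)]

end Geometric

/-- Values of `q*` and `r` under geometric decay `Δ(j) = κ·ρ^j` (`κ > 0`, `ρ ∈ (0,1)`):
`q*(x) ≍ max{log(x⁻¹), 1}` and `r(δ) ≍ δ / log(max{δ⁻¹, e})` with constants only
depending on `ρ` and `κ`. -/
theorem qstar_r_geometric_decay (κ ρ : ℝ) (hκ : 0 < κ) (hρ0 : 0 < ρ) (hρ1 : ρ < 1) :
    (∃ c C : ℝ, 0 < c ∧ c ≤ C ∧ ∀ x : ℝ, 0 < x →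
      c * max (Real.log x⁻¹) 1 ≤ (qstar (fun j => κ * ρ ^ j) x : ℝ) ∧
      (qstar (fun j => κ * ρ ^ j) x : ℝ) ≤ C * max (Real.log x⁻¹) 1) ∧
    (∃ c' C' : ℝ, 0 < c' ∧ c' ≤ C' ∧ ∀ δ : ℝ, 0 < δ →
      c' * (δ / Real.log (max δ⁻¹ (Real.exp 1))) ≤ rFn (fun j => κ * ρ ^ j) δ ∧
      rFn (fun j => κ * ρ ^ j) δ ≤ C' * (δ / Real.log (max δ⁻¹ (Real.exp 1)))) := by
  set c := (Real.log ρ⁻¹ + |Real.log (κ / (1 - ρ))| + 1)⁻¹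
  have hc : 0 < c := inv_pos.mpr (by
    have := Real.log_pos ((one_lt_inv₀ hρ0).mpr hρ1); positivity)
  have hlo := fun x (hx : 0 < x) => le_qstar_geometric hκ hρ0 hρ1 hx
  have hup := fun x (hx : 0 < x) => qstar_geometric_le hκ hρ0 hρ1 hx
  have hq1 : ∀ x > 0, 1 ≤ (qstar (fun j => κ * ρ ^ j) x : ℝ) :=
    fun x hx => Nat.one_le_cast.mpr (qstar_geometric_spec hκ hρ0 hρ1 hx).1
  obtain ⟨ε, hε, hεr⟩ := exists_le_rFn_of_qstar_le hq1 hup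
  have hrup := fun δ (hδ : 0 < δ) => rFn_le_of_le_qstar hc hlo hδ
  refine ⟨⟨c, _, hc, ?_, fun x hx => ⟨hlo x hx, hup x hx⟩⟩,
    ⟨ε, c⁻¹, hε, ?_, fun δ hδ => ?_⟩⟩
  · exact le_of_mul_le_mul_right ((hlo 1 one_pos).trans (hup 1 one_pos)) (logScale_pos 1)
  · exact le_of_mul_le_mul_right ((hεr 1 one_pos).trans (hrup 1 one_pos))
      (div_pos one_pos (logScale_pos 1))
  · rw [log_max_inv_exp_one hδ]
    exact ⟨hεr δ hδ, hrup δ hδ⟩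
end

section
/- L²-norm bound under a V-bound: Let 𝔻 > 0 and δ > 0, and let s ≥ 0 satisfy s + Σ_{j=1}^∞ min{s, 𝔻·Δ(j)} ≤ δ. Then s ≤ 𝔻·r(δ/𝔻). In particular, for any measurable f with V(f) ≤ δ one has ‖f‖₂,ₙ ≤ 𝔻·r(δ/𝔻). -/
open MeasureTheory

/-- The empirical `L^2`-type norm `‖f‖_{2,n}`. -/
noncomputable def norm2n {Ω S : Type*} [MeasurableSpace Ω] [MeasurableSpace S]
    (P : Measure Ω) (n : ℕ) (Z : ℕ → Ω → S) (f : S → ℝ → ℝ) : ℝ :=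
  Real.sqrt ((1 / (n : ℝ)) *
    ∑ i ∈ Finset.Icc 1 n, ∫ ω, (f (Z i ω) ((i : ℝ) / (n : ℝ))) ^ 2 ∂P)

/-- The seminorm `V(f) = ‖f‖_{2,n} + ∑_{k=1}^∞ min{‖f‖_{2,n}, 𝔻·Δ(k)}`. -/
noncomputable def Vnorm {Ω S : Type*} [MeasurableSpace Ω] [MeasurableSpace S]
    (P : Measure Ω) (n : ℕ) (Z : ℕ → Ω → S) (Δ : ℕ → ℝ) (D : ℝ) (f : S → ℝ → ℝ) : ℝ :=
  norm2n P n Z f + ∑' k : ℕ, min (norm2n P n Z f) (D * Δ (k + 1))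
/-!
Put `x = s/𝔻`, so that `x + ∑_{j ≥ 1} min{x, Δ(j)} ≤ δ/𝔻`, and let `q = q*(x)`. If `q ≥ 2`, minimality
of `q` gives `β(q-1) > (q-1)·x`. Either `Δ(q-1) ≥ x`, and then the first `q-1` terms of the series are
all equal to `x`, or `Δ(q-1) < x`, and then by monotonicity the series dominates `β(q-1)`. In both
cases the series is at least `(q-1)·x`, hence `q*(x)·x ≤ δ/𝔻` and `x ≤ r(δ/𝔻)`.
-/

section

variable {Δ : ℕ → ℝ}

lemma betaFn_le_tsum (hΔnn : ∀ k, 0 ≤ Δ k) (hΔsum : Summable Δ) (q : ℕ) :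
    betaFn Δ q ≤ ∑' j, Δ j := by
  rw [← hΔsum.sum_add_tsum_nat_add q, betaFn]
  exact le_add_of_nonneg_left (Finset.sum_nonneg fun i _ => hΔnn i)

lemma exists_betaFn_le_mul_s8 (hΔnn : ∀ k, 0 ≤ Δ k) (hΔsum : Summable Δ) {x : ℝ} (hx : 0 < x) :
    ∃ q : ℕ, 1 ≤ q ∧ betaFn Δ q ≤ q * x := by
  obtain ⟨q, hq⟩ := exists_nat_ge ((∑' j, Δ j) / x + 1)
  have hT : 0 ≤ (∑' j, Δ j) / x := div_nonneg (tsum_nonneg hΔnn) hx.le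
  refine ⟨q, by exact_mod_cast (by linarith : (1 : ℝ) ≤ q), ?_⟩
  calc betaFn Δ q ≤ ∑' j, Δ j := betaFn_le_tsum hΔnn hΔsum q
    _ ≤ q * x := by rw [← div_le_iff₀ hx]; linarith

lemma one_le_qstar (hΔnn : ∀ k, 0 ≤ Δ k) (hΔsum : Summable Δ) {x : ℝ} (hx : 0 < x) :
    1 ≤ qstar Δ x :=
  (Nat.sInf_mem (exists_betaFn_le_mul_s8 hΔnn hΔsum hx)).1

lemma mul_lt_betaFn_of_lt_qstar {x : ℝ} {p : ℕ} (hp : 1 ≤ p) (hpq : p < qstar Δ x) :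
    p * x < betaFn Δ p :=
  not_le.mp fun h => Nat.notMem_of_lt_sInf hpq ⟨hp, h⟩

lemma min_mul_betaFn_le_tsum_min (hΔnn : ∀ k, 0 ≤ Δ k) (hΔ : Antitone Δ) (hΔsum : Summable Δ)
    {x : ℝ} (hx : 0 ≤ x) (p : ℕ) :
    min ((p + 1) * x) (betaFn Δ (p + 1)) ≤ ∑' j, min x (Δ (j + 1)) := by
  have hnn : ∀ j, 0 ≤ min x (Δ (j + 1)) := fun j => le_min hx (hΔnn _)
  have hsum : Summable fun j => min x (Δ (j + 1)) :=
    .of_nonneg_of_le hnn (fun j => min_le_right _ _) ((summable_nat_add_iff 1).mpr hΔsum)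
  rcases le_or_gt x (Δ (p + 1)) with hbig | hsmall
  · have hhead : ∑ j ∈ Finset.range (p + 1), min x (Δ (j + 1)) = (p + 1) * x := by
      rw [Finset.sum_congr rfl fun j hj =>
        min_eq_left (hbig.trans (hΔ (Nat.succ_le_succ (Finset.mem_range_succ_iff.mp hj))))]
      simp
    exact (min_le_left _ _).trans (hhead ▸ hsum.sum_le_tsum _ fun j _ => hnn j)
  · have htail : ∑' j, min x (Δ (j + p + 1)) = betaFn Δ (p + 1) :=
      tsum_congr fun j => min_eq_right ((hΔ (by omega)).trans hsmall.le)
    refine (min_le_right _ _).trans ?_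
    rw [← htail, ← hsum.sum_add_tsum_nat_add p]
    exact le_add_of_nonneg_left (Finset.sum_nonneg fun j _ => hnn j)

lemma qstar_mul_le_add_tsum_min (hΔnn : ∀ k, 0 ≤ Δ k) (hΔ : Antitone Δ) (hΔsum : Summable Δ)
    {x : ℝ} (hx : 0 < x) :
    qstar Δ x * x ≤ x + ∑' j, min x (Δ (j + 1)) := by
  obtain ⟨m, hm⟩ := Nat.exists_eq_add_of_le' (one_le_qstar hΔnn hΔsum hx)
  rw [hm]
  rcases m with _ | m
  · have : 0 ≤ ∑' j, min x (Δ (j + 1)) := tsum_nonneg fun j => le_min hx.le (hΔnn _)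
    simpa using this
  · have hβ := mul_lt_betaFn_of_lt_qstar (Δ := Δ) (x := x) (Nat.le_add_left 1 m) (by omega)
    have := min_mul_betaFn_le_tsum_min hΔnn hΔ hΔsum hx.le m
    push_cast at hβ ⊢
    rw [min_eq_left hβ.le] at this
    linarith

lemma le_rFn_s8 (hΔnn : ∀ k, 0 ≤ Δ k) (hΔsum : Summable Δ) {x δ : ℝ} (hx : 0 < x)
    (h : qstar Δ x * x ≤ δ) : x ≤ rFn Δ δ := by
  refine le_csSup ⟨δ, fun r ⟨hr, hrδ⟩ => ?_⟩ ⟨hx, h⟩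
  have : (1 : ℝ) ≤ qstar Δ r := by exact_mod_cast one_le_qstar hΔnn hΔsum hr
  nlinarith

lemma rFn_nonneg (Δ : ℕ → ℝ) (δ : ℝ) : 0 ≤ rFn Δ δ :=
  Real.sSup_nonneg fun _ hr => hr.1.le

lemma tsum_min_mul_left {D : ℝ} (hD : 0 ≤ D) (s : ℝ) :
    ∑' j, min (D * s) (D * Δ j) = D * ∑' j, min s (Δ j) := by
  simp only [← mul_min_of_nonneg _ _ hD, tsum_mul_left]

end

theorem l2norm_bound_under_V_general (Δ : ℕ → ℝ)
    (hΔnn : ∀ k, 0 ≤ Δ k) (hΔmono : ∀ k, Δ (k + 1) ≤ Δ k) (hΔsum : Summable Δ)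
    (D δ : ℝ) (hD : 0 < D) :
    (∀ s : ℝ, 0 ≤ s → s + (∑' j : ℕ, min s (D * Δ (j + 1))) ≤ δ →
      s ≤ D * rFn Δ (δ / D)) ∧
    (∀ (Ω S : Type) [MeasurableSpace Ω] [MeasurableSpace S]
      (P : Measure Ω) [IsProbabilityMeasure P]
      (n : ℕ), 1 ≤ n → ∀ (Z : ℕ → Ω → S) (f : S → ℝ → ℝ),
      Measurable (Function.uncurry f) →
      Vnorm P n Z Δ D f ≤ δ → norm2n P n Z f ≤ D * rFn Δ (δ / D)) := by
  have key : ∀ s : ℝ, 0 ≤ s → s + (∑' j : ℕ, min s (D * Δ (j + 1))) ≤ δ →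
      s ≤ D * rFn Δ (δ / D) := by
    intro s hs h
    obtain rfl | hs := hs.eq_or_lt
    · exact mul_nonneg hD.le (rFn_nonneg Δ _)
    have hx : 0 < s / D := div_pos hs hD
    have hscaled : s / D + ∑' j, min (s / D) (Δ (j + 1)) ≤ δ / D := by
      rw [le_div_iff₀ hD, add_mul, div_mul_cancel₀ _ hD.ne', mul_comm (tsum _),
        ← tsum_min_mul_left hD.le, mul_div_cancel₀ _ hD.ne']
      exact h
    rw [← div_le_iff₀' hD]
    exact le_rFn_s8 hΔnn hΔsum hx ((qstar_mul_le_add_tsum_min hΔnn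
      (antitone_nat_of_succ_le hΔmono) hΔsum hx).trans hscaled)
  exact ⟨key, fun Ω S _ _ P _ n _ Z f _ hV => key _ (Real.sqrt_nonneg _) hV⟩

/-- `L²`-norm bound under a `V`-bound: if `s ≥ 0` satisfies
`s + ∑_{j=1}^∞ min{s, 𝔻·Δ(j)} ≤ δ` then `s ≤ 𝔻·r(δ/𝔻)`; in particular, any measurable
`f` with `V(f) ≤ δ` satisfies `‖f‖_{2,n} ≤ 𝔻·r(δ/𝔻)`. -/
theorem l2norm_bound_under_V (Δ : ℕ → ℝ)
    (hΔnn : ∀ k, 0 ≤ Δ k) (hΔmono : ∀ k, Δ (k + 1) ≤ Δ k) (hΔsum : Summable Δ)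
    (D δ : ℝ) (hD : 0 < D) (hδ : 0 < δ) :
    (∀ s : ℝ, 0 ≤ s → s + (∑' j : ℕ, min s (D * Δ (j + 1))) ≤ δ →
      s ≤ D * rFn Δ (δ / D)) ∧
    (∀ (Ω S : Type) [MeasurableSpace Ω] [MeasurableSpace S]
      (P : Measure Ω) [IsProbabilityMeasure P]
      (n : ℕ), 1 ≤ n → ∀ (Z : ℕ → Ω → S) (f : S → ℝ → ℝ),
      Measurable (Function.uncurry f) →
      Vnorm P n Z Δ D f ≤ δ → norm2n P n Z f ≤ D * rFn Δ (δ / D)) :=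
  l2norm_bound_under_V_general Δ hΔnn hΔmono hΔsum D δ hD
end

section
/- Truncation lemma, part (i): Let m > 0 and x₁, x₂, x₃ ∈ ℝ. If |x₁| + |x₂| ≤ m, then |φ_m^∧(x₁ + x₂ + x₃) − φ_m^∧(x₁) − φ_m^∧(x₂)| ≤ min{|x₃|, 2m}. -/
/-- The truncation map `φ_m^∧(x) = (x ∨ (−m)) ∧ m`. -/
def phiTrunc (m x : ℝ) : ℝ := min (max x (-m)) m

lemma phiTrunc_eq_self {m x : ℝ} (h : |x| ≤ m) : phiTrunc m x = x := by
  obtain ⟨hl, hu⟩ := abs_le.mp h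
  rw [phiTrunc, max_eq_left hl, min_eq_left hu]

lemma abs_phiTrunc_le {m : ℝ} (hm : 0 ≤ m) (x : ℝ) : |phiTrunc m x| ≤ m :=
  abs_le.mpr ⟨le_min (le_max_right _ _) (by linarith), min_le_right _ _⟩

lemma abs_phiTrunc_sub_phiTrunc_le (m a b : ℝ) :
    |phiTrunc m a - phiTrunc m b| ≤ |a - b| :=
  calc |min (max a (-m)) m - min (max b (-m)) m|
      ≤ max |max a (-m) - max b (-m)| |m - m| := abs_min_sub_min_le_max _ _ _ _
    _ = |max a (-m) - max b (-m)| := by simp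
    _ ≤ |a - b| := abs_max_sub_max_le_abs _ _ _

lemma abs_phiTrunc_add_sub_le {m a : ℝ} (ha : |a| ≤ m) (t : ℝ) :
    |phiTrunc m (a + t) - a| ≤ min |t| (2 * m) := by
  refine le_min ?_ ?_
  · simpa [phiTrunc_eq_self ha] using abs_phiTrunc_sub_phiTrunc_le m (a + t) a
  · calc |phiTrunc m (a + t) - a|
        ≤ |phiTrunc m (a + t)| + |a| := abs_sub _ _
      _ ≤ 2 * m := by linarith [abs_phiTrunc_le ((abs_nonneg a).trans ha) (a + t)]

theorem truncation_lemma_i_general (m x1 x2 x3 : ℝ) (h : |x1| + |x2| ≤ m) :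
    |phiTrunc m (x1 + x2 + x3) - phiTrunc m x1 - phiTrunc m x2| ≤ min |x3| (2 * m) := by
  have h1 : |x1| ≤ m := by linarith [abs_nonneg x2]
  have h2 : |x2| ≤ m := by linarith [abs_nonneg x1]
  rw [phiTrunc_eq_self h1, phiTrunc_eq_self h2, sub_sub]
  exact abs_phiTrunc_add_sub_le ((abs_add_le x1 x2).trans h) x3

/-- Truncation lemma, part (i): if `|x₁| + |x₂| ≤ m`, then
`|φ_m^∧(x₁+x₂+x₃) − φ_m^∧(x₁) − φ_m^∧(x₂)| ≤ min{|x₃|, 2m}`. -/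
theorem truncation_lemma_i (m x1 x2 x3 : ℝ) (hm : 0 < m) (h : |x1| + |x2| ≤ m) :
    |phiTrunc m (x1 + x2 + x3) - phiTrunc m x1 - phiTrunc m x2| ≤ min |x3| (2 * m) :=
  truncation_lemma_i_general m x1 x2 x3 h
end

section
/- Maximal inequality for martingale parts with restricted conditional variance: There exists a universal constant c > 0 with the following property. Let (Ω, 𝒜, P) be a probability space with a filtration 𝒢₀ ⊆ 𝒢₁ ⊆ … ⊆ 𝒢ₙ ⊆ 𝒜, let F be a nonempty finite index set, and let M, R > 0. For each f ∈ F let ξ₁(f), …, ξₙ(f) be real random variables such that ξ_i(f) is 𝒢_i-measurable and |ξ_i(f)| ≤ M almost surely. Define G_n^{(1)}(f) = n^{−1/2}·Σ_{i=1}^n (ξ_i(f) − E[ξ_i(f) | 𝒢_{i−1}]) and R_n(f)² = (1/n)·Σ_{i=1}^n E[ξ_i(f)² | 𝒢_{i−1}]. Then E[max_{f ∈ F} |G_n^{(1)}(f)|·1_{{R_n(f)² ≤ R²}}] ≤ c·(R·√H + M·H/√n), where H = max{1, log|F|}. -/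
/-!
For `|t| · 2M ≤ 1` the bound `eˣ ≤ 1 + x + x²` on `[-1, 1]` gives
`E[exp (t (ξᵢ - E[ξᵢ | 𝒢ᵢ₋₁]) - t² E[ξᵢ² | 𝒢ᵢ₋₁]) | 𝒢ᵢ₋₁] ≤ 1`, so the product of these factors,
`exp (t Sₙ - t² Vₙ)` with `Sₙ` the compensated sum and `Vₙ` the sum of conditional second moments,
has mean at most one. On the event `{Vₙ ≤ n R²}` this bounds `E[exp (t Sₙ)]` by `exp (t² n R²)`.
Jensen's inequality for `exp`, summed over `f ∈ F` and over both signs of `Sₙ`, then gives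
`u · E[max_f …] ≤ log (3 |F|) + u² R²` for every `0 < u ≤ √n / (2M)`, and optimising in `u`
yields `R √H + M H / √n` up to a constant.
-/

open MeasureTheory ProbabilityTheory Finset Real

variable {Ω : Type*} {m m0 : MeasurableSpace Ω} {P : Measure Ω}

lemma ae_abs_sub_condExp_le {ξ : Ω → ℝ} {M : ℝ} (hb : ∀ᵐ ω ∂P, |ξ ω| ≤ M) :
    ∀ᵐ ω ∂P, |ξ ω - P[ξ|m] ω| ≤ 2 * M := by
  filter_upwards [hb, ae_bdd_abs_condExp_of_ae_bdd_abs (m := m) hb] with ω h1 h2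
  linarith [abs_sub (ξ ω) (P[ξ|m] ω)]

lemma ae_abs_mul_sub_condExp_le_one {ξ : Ω → ℝ} {M t : ℝ} (hb : ∀ᵐ ω ∂P, |ξ ω| ≤ M)
    (ht : |t| * (2 * M) ≤ 1) : ∀ᵐ ω ∂P, |t * (ξ ω - P[ξ|m] ω)| ≤ 1 := by
  filter_upwards [ae_abs_sub_condExp_le (m := m) hb] with ω h
  rw [abs_mul]
  exact (mul_le_mul_of_nonneg_left h (abs_nonneg t)).trans ht

lemma integrable_exp_mul_sub_condExp [IsFiniteMeasure P] {ξ : Ω → ℝ}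
    (hξ : AEStronglyMeasurable ξ P) {M : ℝ} (hb : ∀ᵐ ω ∂P, |ξ ω| ≤ M) (t : ℝ) :
    Integrable (fun ω => exp (t * (ξ ω - P[ξ|m] ω))) P :=
  integrable_exp_mul_of_mem_Icc (hξ.sub integrable_condExp.1).aemeasurable
    ((ae_abs_sub_condExp_le hb).mono fun _ h => abs_le.1 h)

lemma condExp_exp_mul_sub_condExp_le [IsFiniteMeasure P] (hm : m ≤ m0) {ξ : Ω → ℝ}
    (hξ : AEStronglyMeasurable ξ P) {M t : ℝ} (hb : ∀ᵐ ω ∂P, |ξ ω| ≤ M)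
    (ht : |t| * (2 * M) ≤ 1) :
    P[fun ω => exp (t * (ξ ω - P[ξ|m] ω))|m] ≤ᵐ[P]
      fun ω => 1 + t ^ 2 * P[fun ω => ξ ω ^ 2|m] ω := by
  set X := ξ - P[ξ|m]
  have hξ2 : MemLp ξ 2 P := MemLp.of_bound hξ M (by simpa using hb)
  have hXi : Integrable X P := (hξ2.integrable one_le_two).sub integrable_condExp
  have hX2i : Integrable (X ^ 2) P := (hξ2.sub (hξ2.condExp one_le_two)).integrable_sq
  have hquad : (fun ω => exp (t * X ω)) ≤ᵐ[P] (fun _ => 1) + t • X + t ^ 2 • X ^ 2 := by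
    filter_upwards [ae_abs_mul_sub_condExp_le_one (m := m) hb ht] with ω h
    have := abs_le.1 (abs_exp_sub_one_sub_id_le (x := t * X ω) h)
    simp only [Pi.add_apply, Pi.smul_apply, Pi.pow_apply, smul_eq_mul]
    nlinarith
  have hlin : P[(fun _ => 1) + t • X + t ^ 2 • X ^ 2|m] =ᵐ[P]
      (fun _ => 1) + t • P[X|m] + t ^ 2 • Var[ξ; P | m] := by
    have h1 := condExp_add ((integrable_const 1).add (hXi.smul t)) (hX2i.smul (t ^ 2)) m
    have h2 := condExp_add (integrable_const (1 : ℝ)) (hXi.smul t) m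
    filter_upwards [h1, h2, condExp_smul t X m, condExp_smul (t ^ 2) (X ^ 2) m] with ω h1 h2 h3 h4
    simp only [Pi.add_apply, Pi.smul_apply] at h1 h2 h3 h4 ⊢
    rw [h1, h2, h3, h4, condExp_const hm]
    rfl
  have hcenter : P[X|m] =ᵐ[P] 0 := by
    filter_upwards [condExp_sub (m := m) (hξ2.integrable one_le_two) integrable_condExp] with ω h
    rw [h, Pi.sub_apply, condExp_of_stronglyMeasurable hm stronglyMeasurable_condExp
      integrable_condExp, sub_self, Pi.zero_apply]
  filter_upwards [condExp_mono (integrable_exp_mul_sub_condExp hξ hb t)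
      (((integrable_const 1).add (hXi.smul t)).add (hX2i.smul (t ^ 2))) hquad,
    hlin, hcenter, condVar_ae_le_condExp_sq hm hξ2] with ω h1 h2 h3 h4
  simp only [Pi.add_apply, Pi.smul_apply, smul_eq_mul, Pi.zero_apply] at h1 h2 h3 h4
  rw [h2, h3] at h1
  change _ ≤ 1 + t ^ 2 * P[ξ ^ 2|m] ω
  nlinarith [sq_nonneg t]

lemma condExp_exp_increment_le_one [IsFiniteMeasure P] (hm : m ≤ m0) {ξ : Ω → ℝ}
    (hξ : AEStronglyMeasurable ξ P) {M t : ℝ} (hb : ∀ᵐ ω ∂P, |ξ ω| ≤ M)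
    (ht : |t| * (2 * M) ≤ 1) :
    P[fun ω => exp (t * (ξ ω - P[ξ|m] ω) - t ^ 2 * P[fun ω => ξ ω ^ 2|m] ω)|m] ≤ᵐ[P] 1 := by
  set σ := P[fun ω => ξ ω ^ 2|m]
  have hσ : 0 ≤ᵐ[P] σ := condExp_nonneg (ae_of_all _ fun ω => sq_nonneg _)
  have hpull := condExp_stronglyMeasurable_mul_of_bound hm
    (f := fun ω => exp (-(t ^ 2 * σ ω))) (by fun_prop)
    (integrable_exp_mul_sub_condExp (m := m) hξ hb t) 1 <| by
      filter_upwards [hσ] with ω h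
      rw [norm_of_nonneg (exp_pos _).le, exp_le_one_iff, neg_nonpos]
      exact mul_nonneg (sq_nonneg t) h
  have hsplit : (fun ω => exp (t * (ξ ω - P[ξ|m] ω) - t ^ 2 * σ ω)) =
      (fun ω => exp (-(t ^ 2 * σ ω))) * fun ω => exp (t * (ξ ω - P[ξ|m] ω)) := by
    ext ω
    rw [Pi.mul_apply, ← exp_add]
    ring_nf
  rw [hsplit]
  filter_upwards [hpull, condExp_exp_mul_sub_condExp_le hm hξ hb ht] with ω h1 h2
  rw [h1, Pi.mul_apply, Pi.one_apply]
  calc exp (-(t ^ 2 * σ ω)) * P[fun ω => exp (t * (ξ ω - P[ξ|m] ω))|m] ω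
      ≤ exp (-(t ^ 2 * σ ω)) * exp (t ^ 2 * σ ω) := by
        gcongr
        exact h2.trans (by linarith [add_one_le_exp (t ^ 2 * σ ω)])
    _ = 1 := by rw [← exp_add, neg_add_cancel, exp_zero]

section Product

variable {e : ℕ → Ω → ℝ} {n : ℕ} {C : ℝ}

lemma ae_prod_range_le_pow (he0 : ∀ i < n, 0 ≤ e i) (heC : ∀ i < n, ∀ᵐ ω ∂P, e i ω ≤ C) :
    ∀ᵐ ω ∂P, ∏ i ∈ range n, e i ω ≤ C ^ n := by
  filter_upwards [(Filter.eventually_all_finset (range n)).2 fun i hi => heC i (mem_range.1 hi)]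
    with ω hω
  calc ∏ i ∈ range n, e i ω ≤ ∏ _i ∈ range n, C :=
        prod_le_prod (fun i hi => he0 i (mem_range.1 hi) ω) hω
    _ = C ^ n := by rw [prod_const, card_range]

lemma stronglyMeasurable_prod_range (ℱ : Filtration ℕ m0)
    (he : ∀ i < n, StronglyMeasurable[ℱ (i + 1)] (e i)) :
    StronglyMeasurable[ℱ n] (fun ω => ∏ i ∈ range n, e i ω) :=
  Finset.stronglyMeasurable_fun_prod _ fun i hi =>
    (he i (mem_range.1 hi)).mono (ℱ.mono (mem_range.1 hi))

lemma integrable_prod_range [IsFiniteMeasure P] (ℱ : Filtration ℕ m0)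
    (he : ∀ i < n, StronglyMeasurable[ℱ (i + 1)] (e i)) (he0 : ∀ i < n, 0 ≤ e i)
    (heC : ∀ i < n, ∀ᵐ ω ∂P, e i ω ≤ C) :
    Integrable (fun ω => ∏ i ∈ range n, e i ω) P :=
  .of_mem_Icc 0 (C ^ n) ((stronglyMeasurable_prod_range ℱ he).mono (ℱ.le n)).aemeasurable <| by
    filter_upwards [ae_prod_range_le_pow he0 heC] with ω h
    exact ⟨prod_nonneg fun i hi => he0 i (mem_range.1 hi) ω, h⟩

lemma integral_prod_range_le_one [IsProbabilityMeasure P] (ℱ : Filtration ℕ m0)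
    (he : ∀ i < n, StronglyMeasurable[ℱ (i + 1)] (e i)) (he0 : ∀ i < n, 0 ≤ e i)
    (heC : ∀ i < n, ∀ᵐ ω ∂P, e i ω ≤ C) (hstep : ∀ i < n, P[e i|ℱ i] ≤ᵐ[P] 1) :
    ∫ ω, ∏ i ∈ range n, e i ω ∂P ≤ 1 := by
  induction n with
  | zero => simp
  | succ n ih =>
    have he' : ∀ i < n, StronglyMeasurable[ℱ (i + 1)] (e i) := fun i hi => he i (by omega)
    have he0' : ∀ i < n, 0 ≤ e i := fun i hi => he0 i (by omega)
    have heC' : ∀ i < n, ∀ᵐ ω ∂P, e i ω ≤ C := fun i hi => heC i (by omega)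
    set L := fun ω => ∏ i ∈ range n, e i ω
    have hL0 : 0 ≤ L := fun ω => prod_nonneg fun i hi => he0' i (mem_range.1 hi) ω
    have hen : Integrable (e n) P :=
      .of_mem_Icc 0 C ((he n n.lt_succ_self).mono (ℱ.le _)).aemeasurable <| by
        filter_upwards [heC n n.lt_succ_self] with ω h
        exact ⟨he0 n n.lt_succ_self ω, h⟩
    have hpull : P[L * e n|ℱ n] =ᵐ[P] L * P[e n|ℱ n] :=
      condExp_stronglyMeasurable_mul_of_bound (ℱ.le n) (stronglyMeasurable_prod_range ℱ he')
        hen (C ^ n) <| by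
          filter_upwards [ae_prod_range_le_pow he0' heC'] with ω h
          rwa [norm_of_nonneg (hL0 ω)]
    have hcond0 : 0 ≤ᵐ[P] P[e n|ℱ n] :=
      condExp_nonneg (ae_of_all _ (he0 n n.lt_succ_self))
    calc ∫ ω, ∏ i ∈ range (n + 1), e i ω ∂P = ∫ ω, (L * e n) ω ∂P := by
          simp_rw [prod_range_succ]; rfl
      _ = ∫ ω, (L * P[e n|ℱ n]) ω ∂P := by
          rw [← integral_condExp (ℱ.le n)]
          exact integral_congr_ae hpull
      _ ≤ ∫ ω, L ω ∂P := by
          refine integral_mono_of_nonneg ?_ (integrable_prod_range ℱ he' he0' heC') ?_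
          · filter_upwards [hcond0] with ω h
            exact mul_nonneg (hL0 ω) h
          · filter_upwards [hstep n n.lt_succ_self] with ω h
            exact mul_le_of_le_one_right (hL0 ω) h
      _ ≤ 1 := ih he' he0' heC' fun i hi => hstep i (by omega)

end Product

section LogSumExp

variable {ι : Type*} [Fintype ι] [Nonempty ι]

lemma aestronglyMeasurable_sup' {Y : ι → Ω → ℝ} (hY : ∀ i, AEStronglyMeasurable (Y i) P) :
    AEStronglyMeasurable (fun ω => univ.sup' univ_nonempty fun i => Y i ω) P := by
  simp_rw [← Finset.sup'_apply]
  exact Finset.sup'_induction univ_nonempty Y (p := (AEStronglyMeasurable · P))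
    (fun _ hf _ hg => hf.sup hg) fun i _ => hY i

/-- Jensen's inequality for `exp`, combined with `exp (s · max) ≤ ∑ exp (s · Yᵢ)`. -/
lemma mul_integral_sup'_le_log_card_mul [IsProbabilityMeasure P] {Y : ι → Ω → ℝ} {C s B : ℝ}
    (hY : ∀ i, AEStronglyMeasurable (Y i) P) (hYC : ∀ i, ∀ᵐ ω ∂P, |Y i ω| ≤ C)
    (hB : ∀ i, ∫ ω, exp (s * Y i ω) ∂P ≤ B) :
    s * ∫ ω, univ.sup' univ_nonempty (fun i => Y i ω) ∂P ≤ log (Fintype.card ι * B) := by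
  set Z := fun ω => univ.sup' univ_nonempty fun i => Y i ω
  have hZ : ∀ ω, ∃ i, Z ω = Y i ω := fun ω => by
    obtain ⟨i, -, hi⟩ := exists_mem_eq_sup' univ_nonempty fun i => Y i ω
    exact ⟨i, hi⟩
  have hexpY : ∀ i, Integrable (fun ω => exp (s * Y i ω)) P := fun i =>
    integrable_exp_mul_of_mem_Icc (hY i).aemeasurable ((hYC i).mono fun _ h => abs_le.1 h)
  have hZC : ∀ᵐ ω ∂P, |Z ω| ≤ C := by
    filter_upwards [ae_all_iff.2 hYC] with ω h
    obtain ⟨i, hi⟩ := hZ ω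
    rw [hi]
    exact h i
  have hZm := aestronglyMeasurable_sup' hY
  have hZi : Integrable Z P := .of_bound hZm C (by simpa using hZC)
  have hexpZ : Integrable (fun ω => exp (s * Z ω)) P :=
    integrable_exp_mul_of_mem_Icc hZm.aemeasurable (hZC.mono fun _ h => abs_le.1 h)
  have hjensen : exp (∫ ω, s * Z ω ∂P) ≤ ∫ ω, exp (s * Z ω) ∂P :=
    convexOn_exp.map_integral_le continuous_exp.continuousOn isClosed_univ
      (ae_of_all _ fun _ => Set.mem_univ _) (hZi.const_mul s) hexpZ
  have hsum : ∀ ω, exp (s * Z ω) ≤ ∑ i, exp (s * Y i ω) := fun ω => by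
    obtain ⟨i, hi⟩ := hZ ω
    rw [hi]
    exact single_le_sum (f := fun i => exp (s * Y i ω)) (fun _ _ => (exp_pos _).le)
      (mem_univ i)
  have hB0 : 0 < B := (integral_exp_pos (hexpY (Classical.arbitrary ι))).trans_le (hB _)
  rw [← integral_const_mul, le_log_iff_exp_le (by positivity)]
  calc exp (∫ ω, s * Z ω ∂P) ≤ ∫ ω, ∑ i, exp (s * Y i ω) ∂P :=
        hjensen.trans (integral_mono hexpZ (integrable_finsetSum _ fun i _ => hexpY i) hsum)
    _ = ∑ i, ∫ ω, exp (s * Y i ω) ∂P := integral_finsetSum _ fun i _ => hexpY i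
    _ ≤ ∑ _i : ι, B := sum_le_sum fun i _ => hB i
    _ = Fintype.card ι * B := by rw [sum_const, card_univ, nsmul_eq_mul]

end LogSumExp

lemma le_of_forall_mul_le_add_sq {A K B L : ℝ} (hK : 0 < K) (hB : 0 < B) (hL : 0 < L)
    (h : ∀ u, 0 < u → u ≤ L → u * A ≤ K + u ^ 2 * B) : A ≤ 2 * (√(K * B) + K / L) := by
  have hKL : 0 ≤ K / L := by positivity
  rcases le_or_gt √(K / B) L with hq | hq
  · -- the unconstrained optimum `u = √(K / B)` is admissible
    set q := √(K / B)
    have hq0 : 0 < q := sqrt_pos.2 (div_pos hK hB)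
    have hq2 : q ^ 2 * B = K := by rw [sq_sqrt (div_pos hK hB).le, div_mul_cancel₀ _ hB.ne']
    have hKB : √(K * B) = q * B := by
      rw [← hq2, show q ^ 2 * B * B = (q * B) ^ 2 by ring, sqrt_sq (by positivity)]
    have := h q hq0 hq
    rw [hKB]
    nlinarith
  · have hL2 : L ^ 2 * B < K := by
      have := (lt_sqrt hL.le).1 hq
      rwa [lt_div_iff₀ hB] at this
    have := h L hL le_rfl
    have : A ≤ 2 * (K / L) := by
      rw [mul_div_assoc', le_div_iff₀ hL]
      nlinarith
    nlinarith [sqrt_nonneg (K * B)]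

section CompensatedSum

/-- The index is shifted by one: `X i` stands for `ξ_{i+1}`, which is `ℱ (i + 1)`-measurable and
is compensated by its conditional mean given `ℱ i`. -/
noncomputable def compensatedSum (P : Measure Ω) (ℱ : Filtration ℕ m0) (X : ℕ → Ω → ℝ) (n : ℕ)
    (ω : Ω) : ℝ :=
  ∑ i ∈ range n, (X i ω - P[X i|ℱ i] ω)

noncomputable def condSqSum (P : Measure Ω) (ℱ : Filtration ℕ m0) (X : ℕ → Ω → ℝ) (n : ℕ)
    (ω : Ω) : ℝ :=
  ∑ i ∈ range n, P[fun ω => X i ω ^ 2|ℱ i] ω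

variable (ℱ : Filtration ℕ m0) {X : ℕ → Ω → ℝ} {n : ℕ} {M : ℝ}

lemma stronglyMeasurable_compensatedSum (hX : ∀ i < n, StronglyMeasurable[ℱ (i + 1)] (X i)) :
    StronglyMeasurable[ℱ n] (compensatedSum P ℱ X n) :=
  Finset.stronglyMeasurable_fun_sum _ fun i hi =>
    ((hX i (mem_range.1 hi)).mono (ℱ.mono (mem_range.1 hi))).sub
      (stronglyMeasurable_condExp.mono (ℱ.mono (mem_range.1 hi).le))

lemma stronglyMeasurable_condSqSum : StronglyMeasurable[ℱ n] (condSqSum P ℱ X n) :=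
  Finset.stronglyMeasurable_fun_sum _ fun _ hi =>
    stronglyMeasurable_condExp.mono (ℱ.mono (mem_range.1 hi).le)

lemma ae_abs_compensatedSum_le (hXb : ∀ i < n, ∀ᵐ ω ∂P, |X i ω| ≤ M) :
    ∀ᵐ ω ∂P, |compensatedSum P ℱ X n ω| ≤ n * (2 * M) := by
  filter_upwards [(Filter.eventually_all_finset (range n)).2 fun i hi =>
    ae_abs_sub_condExp_le (m := ℱ i) (hXb i (mem_range.1 hi))] with ω hω
  calc |compensatedSum P ℱ X n ω| ≤ ∑ i ∈ range n, |X i ω - P[X i|ℱ i] ω| :=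
        abs_sum_le_sum_abs _ _
    _ ≤ ∑ _i ∈ range n, 2 * M := sum_le_sum hω
    _ = n * (2 * M) := by rw [sum_const, card_range, nsmul_eq_mul]

lemma exp_compensatedSum_sub_condSqSum (t : ℝ) (ω : Ω) :
    exp (t * compensatedSum P ℱ X n ω - t ^ 2 * condSqSum P ℱ X n ω) =
      ∏ i ∈ range n,
        exp (t * (X i ω - P[X i|ℱ i] ω) - t ^ 2 * P[fun ω => X i ω ^ 2|ℱ i] ω) := by
  rw [← exp_sum, compensatedSum, condSqSum, mul_sum, mul_sum, sum_sub_distrib]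

lemma integral_indicator_exp_compensatedSum_le [IsProbabilityMeasure P] {t v : ℝ} {A : Set Ω}
    (hX : ∀ i < n, StronglyMeasurable[ℱ (i + 1)] (X i)) (hXb : ∀ i < n, ∀ᵐ ω ∂P, |X i ω| ≤ M)
    (ht : |t| * (2 * M) ≤ 1) (hA : ∀ ω ∈ A, condSqSum P ℱ X n ω ≤ v) :
    ∫ ω, A.indicator (fun ω => exp (t * compensatedSum P ℱ X n ω)) ω ∂P ≤ exp (t ^ 2 * v) := by
  set e : ℕ → Ω → ℝ := fun i ω =>
    exp (t * (X i ω - P[X i|ℱ i] ω) - t ^ 2 * P[fun ω => X i ω ^ 2|ℱ i] ω)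
  have he : ∀ i < n, StronglyMeasurable[ℱ (i + 1)] (e i) := fun i hi =>
    continuous_exp.comp_stronglyMeasurable
      ((((hX i hi).sub (stronglyMeasurable_condExp.mono (ℱ.mono i.le_succ))).const_mul t).sub
        ((stronglyMeasurable_condExp.mono (ℱ.mono i.le_succ)).const_mul _))
  have heC : ∀ i < n, ∀ᵐ ω ∂P, e i ω ≤ exp 1 := fun i hi => by
    filter_upwards [ae_abs_mul_sub_condExp_le_one (m := ℱ i) (hXb i hi) ht,
      condExp_nonneg (m := ℱ i) (ae_of_all P fun ω => sq_nonneg (X i ω))] with ω h1 h2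
    rw [Pi.zero_apply] at h2
    refine exp_le_exp.2 ?_
    nlinarith [le_abs_self (t * (X i ω - P[X i|ℱ i] ω)), mul_nonneg (sq_nonneg t) h2]
  have hstep : ∀ i < n, P[e i|ℱ i] ≤ᵐ[P] 1 := fun i hi =>
    condExp_exp_increment_le_one (ℱ.le i) ((hX i hi).mono (ℱ.le _)).aestronglyMeasurable
      (hXb i hi) ht
  have hpt : ∀ ω, A.indicator (fun ω => exp (t * compensatedSum P ℱ X n ω)) ω ≤
      (∏ i ∈ range n, e i ω) * exp (t ^ 2 * v) := fun ω => by
    rw [← exp_compensatedSum_sub_condSqSum, ← exp_add]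
    by_cases hω : ω ∈ A
    · rw [Set.indicator_of_mem hω, exp_le_exp]
      nlinarith [hA ω hω, sq_nonneg t]
    · rw [Set.indicator_of_notMem hω]
      exact (exp_pos _).le
  calc ∫ ω, A.indicator (fun ω => exp (t * compensatedSum P ℱ X n ω)) ω ∂P
      ≤ ∫ ω, (∏ i ∈ range n, e i ω) * exp (t ^ 2 * v) ∂P :=
        integral_mono_of_nonneg (ae_of_all _ fun ω => Set.indicator_nonneg
          (fun ω _ => (exp_pos _).le) ω)
          ((integrable_prod_range ℱ he (fun i _ ω => (exp_pos _).le) heC).mul_const _)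
          (ae_of_all _ hpt)
    _ = (∫ ω, ∏ i ∈ range n, e i ω ∂P) * exp (t ^ 2 * v) := integral_mul_const _ _
    _ ≤ exp (t ^ 2 * v) := mul_le_of_le_one_left (exp_pos _).le
        (integral_prod_range_le_one ℱ he (fun i _ ω => (exp_pos _).le) heC hstep)

lemma integral_exp_mul_indicator_abs_compensatedSum_le [IsProbabilityMeasure P]
    {t v : ℝ} {A : Set Ω}
    (hX : ∀ i < n, StronglyMeasurable[ℱ (i + 1)] (X i)) (hXb : ∀ i < n, ∀ᵐ ω ∂P, |X i ω| ≤ M)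
    (ht : |t| * (2 * M) ≤ 1) (hv : 0 ≤ v) (hAm : MeasurableSet A)
    (hA : ∀ ω ∈ A, condSqSum P ℱ X n ω ≤ v) :
    ∫ ω, exp (t * A.indicator (fun ω => |compensatedSum P ℱ X n ω|) ω) ∂P ≤
      3 * exp (t ^ 2 * v) := by
  set S := compensatedSum P ℱ X n
  have hint : ∀ s, Integrable (A.indicator fun ω => exp (s * S ω)) P := fun s =>
    (integrable_exp_mul_of_mem_Icc ((stronglyMeasurable_compensatedSum ℱ hX).mono
      (ℱ.le n)).aemeasurable
      ((ae_abs_compensatedSum_le ℱ hXb).mono fun _ h => abs_le.1 h)).indicator hAm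
  have hpt : ∀ ω, exp (t * A.indicator (fun ω => |S ω|) ω) ≤
      1 + A.indicator (fun ω => exp (t * S ω)) ω + A.indicator (fun ω => exp (-t * S ω)) ω := by
    intro ω
    by_cases hω : ω ∈ A
    · simp only [Set.indicator_of_mem hω, neg_mul, ← mul_neg]
      rcases abs_cases (S ω) with ⟨h, _⟩ | ⟨h, _⟩ <;> rw [h]
      · linarith [exp_pos (t * -S ω)]
      · linarith [exp_pos (t * S ω)]
    · simp [Set.indicator_of_notMem hω]
  have hint1 : Integrable (fun ω => 1 + A.indicator (fun ω => exp (t * S ω)) ω) P :=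
    (integrable_const 1).add (hint t)
  have hbound := integral_indicator_exp_compensatedSum_le ℱ hX hXb ht hA
  have hbound' := integral_indicator_exp_compensatedSum_le ℱ hX hXb
    (t := -t) (by rwa [abs_neg]) hA
  rw [neg_sq] at hbound'
  calc ∫ ω, exp (t * A.indicator (fun ω => |S ω|) ω) ∂P
      ≤ ∫ ω, (1 + A.indicator (fun ω => exp (t * S ω)) ω +
          A.indicator (fun ω => exp (-t * S ω)) ω) ∂P :=
        integral_mono_of_nonneg (ae_of_all _ fun _ => (exp_pos _).le)
          (hint1.add (hint (-t))) (ae_of_all _ hpt)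
    _ = 1 + ∫ ω, A.indicator (fun ω => exp (t * S ω)) ω ∂P +
          ∫ ω, A.indicator (fun ω => exp (-t * S ω)) ω ∂P := by
        rw [integral_add hint1 (hint (-t)),
          integral_add (integrable_const 1) (hint t), integral_const, probReal_univ, one_smul]
    _ ≤ 3 * exp (t ^ 2 * v) := by
        linarith [one_le_exp (mul_nonneg (sq_nonneg t) hv)]

/-- `|G_n^{(1)}(f)| · 1{R_n(f)² ≤ R²}` in the notation of the statement. -/
noncomputable def restrictedSum (P : Measure Ω) (ℱ : Filtration ℕ m0) (X : ℕ → Ω → ℝ) (n : ℕ)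
    (R : ℝ) (ω : Ω) : ℝ :=
  |(√n)⁻¹ * compensatedSum P ℱ X n ω| *
    if 1 / (n : ℝ) * condSqSum P ℱ X n ω ≤ R ^ 2 then 1 else 0

lemma restrictedSum_eq_indicator (R : ℝ) (ω : Ω) :
    restrictedSum P ℱ X n R ω = (√n)⁻¹ * {ω | 1 / (n : ℝ) * condSqSum P ℱ X n ω ≤ R ^ 2}.indicator
      (fun ω => |compensatedSum P ℱ X n ω|) ω := by
  simp only [restrictedSum, Set.indicator_apply, Set.mem_ofPred_eq, abs_mul,
    abs_of_nonneg (inv_nonneg.2 (sqrt_nonneg _))]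
  split_ifs <;> ring

lemma aestronglyMeasurable_restrictedSum (hX : ∀ i < n, StronglyMeasurable[ℱ (i + 1)] (X i))
    (R : ℝ) : AEStronglyMeasurable (restrictedSum P ℱ X n R) P :=
  ((((stronglyMeasurable_compensatedSum ℱ hX).mono (ℱ.le n)).measurable.const_mul _).abs.mul
    (Measurable.ite (measurableSet_le
      (((stronglyMeasurable_condSqSum ℱ).mono (ℱ.le n)).measurable.const_mul _) measurable_const)
      measurable_const measurable_const)).aestronglyMeasurable

lemma ae_abs_restrictedSum_le (hXb : ∀ i < n, ∀ᵐ ω ∂P, |X i ω| ≤ M) (R : ℝ) :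
    ∀ᵐ ω ∂P, |restrictedSum P ℱ X n R ω| ≤ (√n)⁻¹ * (n * (2 * M)) := by
  filter_upwards [ae_abs_compensatedSum_le ℱ hXb] with ω h
  rw [restrictedSum_eq_indicator, abs_mul, abs_of_nonneg (inv_nonneg.2 (sqrt_nonneg _)),
    abs_of_nonneg (Set.indicator_nonneg (fun _ _ => abs_nonneg _) _)]
  gcongr
  exact (Set.indicator_le_self' (fun _ _ => abs_nonneg _) ω).trans h

lemma integral_exp_mul_restrictedSum_le [IsProbabilityMeasure P] (hn : 0 < n)
    (hX : ∀ i < n, StronglyMeasurable[ℱ (i + 1)] (X i)) (hXb : ∀ i < n, ∀ᵐ ω ∂P, |X i ω| ≤ M)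
    {u : ℝ} (R : ℝ) (hu : |u| * (2 * M) ≤ √n) :
    ∫ ω, exp (u * restrictedSum P ℱ X n R ω) ∂P ≤ 3 * exp (u ^ 2 * R ^ 2) := by
  have hn' : (0 : ℝ) < n := Nat.cast_pos.2 hn
  have hsn : 0 < √(n : ℝ) := sqrt_pos.2 hn'
  have ht : |u / √n| * (2 * M) ≤ 1 := by
    rwa [abs_div, abs_of_pos hsn, div_mul_eq_mul_div, div_le_one hsn]
  have := integral_exp_mul_indicator_abs_compensatedSum_le ℱ hX hXb ht (v := n * R ^ 2)
    (A := {ω | 1 / (n : ℝ) * condSqSum P ℱ X n ω ≤ R ^ 2}) (by positivity)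
    (measurableSet_le (((stronglyMeasurable_condSqSum ℱ).mono (ℱ.le n)).measurable.const_mul _)
      measurable_const) fun ω hω => by rwa [Set.mem_ofPred_eq, one_div, inv_mul_le_iff₀ hn'] at hω
  have hv : (u / √n) ^ 2 * (n * R ^ 2) = u ^ 2 * R ^ 2 := by
    rw [div_pow, sq_sqrt hn'.le]
    field_simp
  rw [hv] at this
  simpa only [restrictedSum_eq_indicator, ← mul_assoc, div_eq_mul_inv] using this

theorem integral_sup'_restrictedSum_le [IsProbabilityMeasure P]
    {F : Type*} [Fintype F] [Nonempty F] {X : F → ℕ → Ω → ℝ} {R : ℝ}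
    (hn : 0 < n) (hM : 0 < M) (hR : 0 < R)
    (hX : ∀ f, ∀ i < n, StronglyMeasurable[ℱ (i + 1)] (X f i))
    (hXb : ∀ f, ∀ i < n, ∀ᵐ ω ∂P, |X f i ω| ≤ M) :
    ∫ ω, univ.sup' univ_nonempty (fun f => restrictedSum P ℱ (X f) n R ω) ∂P ≤
      16 * (R * √(max 1 (log (Fintype.card F))) +
        M * max 1 (log (Fintype.card F)) / √n) := by
  set H := max 1 (log (Fintype.card F))
  have hH : 1 ≤ H := le_max_left _ _
  have hsn : 0 < √(n : ℝ) := sqrt_pos.2 (Nat.cast_pos.2 hn)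
  have hlog3 : log 3 ≤ 2 := by linarith [log_le_sub_one_of_pos (by norm_num : (0 : ℝ) < 3)]
  have hmain : ∀ u, 0 < u → u ≤ √n / (2 * M) →
      u * ∫ ω, univ.sup' univ_nonempty (fun f => restrictedSum P ℱ (X f) n R ω) ∂P ≤
        4 * H + u ^ 2 * R ^ 2 := fun u hu huL => by
    have hu' : |u| * (2 * M) ≤ √n := by rwa [abs_of_pos hu, ← le_div_iff₀ (by positivity)]
    calc _ ≤ log (Fintype.card F * (3 * exp (u ^ 2 * R ^ 2))) :=
          mul_integral_sup'_le_log_card_mul (fun f => aestronglyMeasurable_restrictedSum ℱ (hX f) R)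
            (fun f => ae_abs_restrictedSum_le ℱ (hXb f) R)
            fun f => integral_exp_mul_restrictedSum_le ℱ hn (hX f) (hXb f) R hu'
      _ = log (Fintype.card F) + log 3 + u ^ 2 * R ^ 2 := by
          rw [log_mul (by positivity) (by positivity), log_mul (by positivity) (by positivity),
            log_exp, add_assoc]
      _ ≤ 4 * H + u ^ 2 * R ^ 2 := by linarith [le_max_right 1 (log (Fintype.card F))]
  have hsqrt : √(4 * H * R ^ 2) = 2 * R * √H := by
    rw [show 4 * H * R ^ 2 = (2 * R) ^ 2 * H by ring, sqrt_mul (sq_nonneg _),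
      sqrt_sq (by positivity)]
  calc _ ≤ 2 * (√(4 * H * R ^ 2) + 4 * H / (√n / (2 * M))) :=
        le_of_forall_mul_le_add_sq (by positivity) (by positivity) (by positivity) hmain
    _ = 4 * (R * √H) + 16 * (M * H / √n) := by
        rw [hsqrt]
        field_simp
        ring
    _ ≤ 16 * (R * √H + M * H / √n) := by
        nlinarith [mul_pos hR (sqrt_pos.2 (by positivity : 0 < H))]

end CompensatedSum

lemma sum_Icc_one_eq_sum_range {M : Type*} [AddCommMonoid M] (g : ℕ → M) (n : ℕ) :
    ∑ i ∈ Icc 1 n, g i = ∑ i ∈ range n, g (i + 1) := by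
  rw [range_eq_Ico, sum_Ico_add' g 0 n 1]
  rfl

/-- Maximal inequality for martingale parts with restricted conditional variance:
there is a universal constant `c > 0` such that for any probability space with a
filtration `𝒢₀ ⊆ … ⊆ 𝒢ₙ`, any nonempty finite index set `F`, constants `M, R > 0`, and
random variables `ξ_i(f)` (`i = 1,…,n`) that are `𝒢_i`-measurable and bounded by `M`
a.s., setting `G_n^{(1)}(f) = n^{-1/2} ∑_{i=1}^n (ξ_i(f) − E[ξ_i(f)|𝒢_{i−1}])` and
`R_n(f)² = (1/n) ∑_{i=1}^n E[ξ_i(f)²|𝒢_{i−1}]`, one has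
`E[max_{f} |G_n^{(1)}(f)|·1_{R_n(f)² ≤ R²}] ≤ c·(R·√H + M·H/√n)` with
`H = max{1, log|F|}`. -/
theorem maximal_inequality_martingale :
    ∃ c : ℝ, 0 < c ∧
      ∀ (Ω : Type) [inst : MeasurableSpace Ω] (P : Measure Ω) [IsProbabilityMeasure P]
        (G : ℕ → MeasurableSpace Ω)
        (F : Type) [Fintype F] [Nonempty F]
        (n : ℕ), 1 ≤ n → ∀ (M R : ℝ), 0 < M → 0 < R →
        ∀ (ξ : F → ℕ → Ω → ℝ),
        (∀ i j, i ≤ j → j ≤ n → G i ≤ G j) →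
        (∀ i, i ≤ n → G i ≤ inst) →
        (∀ f i, 1 ≤ i → i ≤ n → Measurable[G i] (ξ f i)) →
        (∀ f i, 1 ≤ i → i ≤ n → ∀ᵐ ω ∂P, |ξ f i ω| ≤ M) →
        (∫ ω, (Finset.univ.sup' Finset.univ_nonempty fun f =>
            |(Real.sqrt n)⁻¹ *
              ∑ i ∈ Finset.Icc 1 n, (ξ f i ω - (P[ξ f i|G (i - 1)]) ω)| *
            (if (1 / (n : ℝ)) *
                ∑ i ∈ Finset.Icc 1 n, (P[(fun ω' => (ξ f i ω') ^ 2)|G (i - 1)]) ω ≤ R ^ 2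
              then 1 else 0)) ∂P) ≤
          c * (R * Real.sqrt (max 1 (Real.log (Fintype.card F))) +
            M * max 1 (Real.log (Fintype.card F)) / Real.sqrt n) := by
  refine ⟨16, by norm_num, ?_⟩
  intro Ω _ P _ G F _ _ n hn M R hM hR ξ hGmono hGle hmeas hbdd
  -- freezing `G` after time `n` turns it into a filtration
  let ℱ : Filtration ℕ ‹_› :=
    ⟨fun i => G (min i n), fun i j hij => hGmono _ _ (min_le_min_right n hij) (min_le_right j n),
      fun i => hGle _ (min_le_right i n)⟩
  have hℱ : ∀ i ≤ n, ℱ i = G i := fun i hi => congrArg G (min_eq_left hi)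
  have hS : ∀ f ω, ∑ i ∈ Icc 1 n, (ξ f i ω - P[ξ f i|G (i - 1)] ω) =
      compensatedSum P ℱ (fun i => ξ f (i + 1)) n ω := fun f ω => by
    rw [sum_Icc_one_eq_sum_range, compensatedSum]
    exact sum_congr rfl fun i hi => by rw [Nat.add_sub_cancel, hℱ i (mem_range.1 hi).le]
  have hV : ∀ f ω, ∑ i ∈ Icc 1 n, P[fun ω' => ξ f i ω' ^ 2|G (i - 1)] ω =
      condSqSum P ℱ (fun i => ξ f (i + 1)) n ω := fun f ω => by
    rw [sum_Icc_one_eq_sum_range, condSqSum]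
    exact sum_congr rfl fun i hi => by rw [Nat.add_sub_cancel, hℱ i (mem_range.1 hi).le]
  simp only [hS, hV]
  refine integral_sup'_restrictedSum_le ℱ hn hM hR (fun f i hi => ?_)
    fun f i hi => hbdd f (i + 1) (by omega) hi
  rw [hℱ (i + 1) hi]
  exact (hmeas f (i + 1) (by omega) hi).stronglyMeasurable
end

section
/- Vanishing of weighted truncated second moments (Lindeberg averaging lemma, part (i)): Let (W_i(u))_{i ∈ ℕ, u ∈ [0,1]} be real random variables on a common probability space such that for each u ∈ [0,1] and each i, W_i(u) has the same distribution as W₀(u); assume sup_{u ∈ [0,1]} E[W₀(u)²]^{1/2} < ∞ and that there exist C_W > 0 and ς ∈ (0,1] with E[(W₀(u) − W₀(v))²]^{1/2} ≤ C_W·|u − v|^ς for all u, v ∈ [0,1]. Let a_n : [0,1] → ℝ, n ∈ ℕ, satisfy limsup_{n→∞} (1/n)·Σ_{i=1}^n |a_n(i/n)| < ∞, and let (c_n) be a real sequence with c_n → ∞. Then (1/n)·Σ_{i=1}^n |a_n(i/n)|·E[W_i(i/n)²·1_{{|W_i(i/n)| > c_n}}] → 0 as n → ∞. -/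
/-! The pointwise inequality `x² 1{|x| > c} ≤ 2 y² 1{|y| > c/2} + 4 (x - y)²` moves tail second
moments along L²-close variables. Hölder continuity in L² on the compact `[0,1]` gives finite
L²-nets of `{W₀(u)}`, and the finitely many members of a net have vanishing tails by dominated
convergence; hence the tails of `W₀(u)` vanish uniformly in `u` as `c → ∞`. As `W_i(u)` has the
law of `W₀(u)`, all tail factors in the average are uniformly small, while the averages of the
weights stay bounded. -/

open MeasureTheory Filter Topology ProbabilityTheory

noncomputable def truncSq (c x : ℝ) : ℝ := if c < |x| then x ^ 2 else 0

lemma truncSq_nonneg (c x : ℝ) : 0 ≤ truncSq c x := by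
  unfold truncSq; split_ifs <;> positivity

lemma truncSq_le_sq (c x : ℝ) : truncSq c x ≤ x ^ 2 := by
  unfold truncSq; split_ifs
  exacts [le_rfl, sq_nonneg x]

lemma measurable_truncSq (c : ℝ) : Measurable (truncSq c) :=
  Measurable.ite (measurableSet_lt measurable_const measurable_abs) (measurable_id.pow_const 2)
    measurable_const

lemma truncSq_le_add (c x y : ℝ) : truncSq c x ≤ 2 * truncSq (c / 2) y + 4 * (x - y) ^ 2 := by
  unfold truncSq
  split_ifs with hx hy hy
  · nlinarith [sq_nonneg (x - 2 * y)]
  · have hxy : |x| ≤ 2 * |x - y| := by linarith [abs_sub_abs_le_abs_sub x y]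
    nlinarith [sq_abs x, sq_abs (x - y), abs_nonneg x]
  all_goals positivity

section Moments

variable {Ω : Type*} [MeasurableSpace Ω] {P : Measure Ω} {X Y : Ω → ℝ}

lemma integrable_truncSq_comp (hX : MemLp X 2 P) (c : ℝ) :
    Integrable (fun ω => truncSq c (X ω)) P :=
  hX.integrable_sq.mono' ((measurable_truncSq c).comp_aemeasurable
      hX.aestronglyMeasurable.aemeasurable).aestronglyMeasurable
    (Eventually.of_forall fun ω => by
      rw [Real.norm_of_nonneg (truncSq_nonneg c _)]
      exact truncSq_le_sq c _)

lemma tendsto_integral_truncSq (hX : MemLp X 2 P) :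
    Tendsto (fun c => ∫ ω, truncSq c (X ω) ∂P) atTop (𝓝 0) := by
  have hlim : ∀ ω, Tendsto (fun c => truncSq c (X ω)) atTop (𝓝 0) := fun ω =>
    tendsto_const_nhds.congr' <| (eventually_ge_atTop |X ω|).mono fun c hc =>
      (if_neg (not_lt.2 hc)).symm
  simpa using tendsto_integral_filter_of_dominated_convergence (fun ω => X ω ^ 2)
    (Eventually.of_forall fun c => (integrable_truncSq_comp hX c).aestronglyMeasurable)
    (Eventually.of_forall fun c => Eventually.of_forall fun ω => by
      rw [Real.norm_of_nonneg (truncSq_nonneg c _)]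
      exact truncSq_le_sq c _)
    hX.integrable_sq (Eventually.of_forall hlim)

lemma integral_truncSq_le (hX : MemLp X 2 P) (hY : MemLp Y 2 P) (c : ℝ) :
    ∫ ω, truncSq c (X ω) ∂P ≤
      2 * ∫ ω, truncSq (c / 2) (Y ω) ∂P + 4 * ∫ ω, (X ω - Y ω) ^ 2 ∂P := by
  have hYc := (integrable_truncSq_comp hY (c / 2)).const_mul 2
  have hXY : Integrable (fun ω => 4 * (X ω - Y ω) ^ 2) P :=
    (hX.sub hY).integrable_sq.const_mul 4
  calc ∫ ω, truncSq c (X ω) ∂P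
      ≤ ∫ ω, (2 * truncSq (c / 2) (Y ω) + 4 * (X ω - Y ω) ^ 2) ∂P :=
        integral_mono (integrable_truncSq_comp hX c) (hYc.add hXY)
          fun ω => truncSq_le_add c (X ω) (Y ω)
    _ = _ := by rw [integral_add hYc hXY, integral_const_mul, integral_const_mul]

theorem eventually_forall_integral_truncSq_le {ι : Type*} {X : ι → Ω → ℝ} {s : Set ι}
    (hX : ∀ i ∈ s, MemLp (X i) 2 P)
    (hnet : ∀ δ > 0, ∃ t ⊆ s, t.Finite ∧ ∀ i ∈ s, ∃ j ∈ t, ∫ ω, (X i ω - X j ω) ^ 2 ∂P ≤ δ)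
    {ε : ℝ} (hε : 0 < ε) :
    ∀ᶠ c in atTop, ∀ i ∈ s, ∫ ω, truncSq c (X i ω) ∂P ≤ ε := by
  obtain ⟨t, hts, htfin, hnear⟩ := hnet (ε / 8) (by positivity)
  have htail : ∀ᶠ c in atTop, ∀ j ∈ t, ∫ ω, truncSq (c / 2) (X j ω) ∂P ≤ ε / 4 :=
    (eventually_all_finite htfin).2 fun j hj =>
      ((tendsto_integral_truncSq (hX j (hts hj))).comp
        (tendsto_id.atTop_div_const two_pos)).eventually (ge_mem_nhds (by positivity))
  filter_upwards [htail] with c hc i hi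
  obtain ⟨j, hj, hij⟩ := hnear i hi
  calc ∫ ω, truncSq c (X i ω) ∂P
      ≤ 2 * ∫ ω, truncSq (c / 2) (X j ω) ∂P + 4 * ∫ ω, (X i ω - X j ω) ^ 2 ∂P :=
        integral_truncSq_le (hX i hi) (hX j (hts hj)) c
    _ ≤ 2 * (ε / 4) + 4 * (ε / 8) := by gcongr; exact hc j hj
    _ = ε := by ring

theorem exists_finite_net_of_holder {ι : Type*} [PseudoMetricSpace ι] {X : ι → Ω → ℝ}
    {s : Set ι} (hs : IsCompact s) {C ς : ℝ} (hς : 0 < ς)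
    (hHolder : ∀ u ∈ s, ∀ v ∈ s, √(∫ ω, (X u ω - X v ω) ^ 2 ∂P) ≤ C * dist u v ^ ς)
    {δ : ℝ} (hδ : 0 < δ) :
    ∃ t ⊆ s, t.Finite ∧ ∀ i ∈ s, ∃ j ∈ t, ∫ ω, (X i ω - X j ω) ^ 2 ∂P ≤ δ := by
  have hmod : Tendsto (fun r : ℝ => C * r ^ ς) (𝓝 0) (𝓝 0) := by
    simpa [Real.zero_rpow hς.ne'] using
      (Real.continuousAt_rpow_const 0 ς (Or.inr hς.le)).tendsto.const_mul C
  obtain ⟨r, hr, hrδ⟩ :=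
    Metric.eventually_nhds_iff.1 (hmod.eventually (gt_mem_nhds (Real.sqrt_pos.2 hδ)))
  obtain ⟨t, hts, htfin, hcover⟩ := Metric.finite_approx_of_totallyBounded hs.totallyBounded r hr
  refine ⟨t, hts, htfin, fun i hi => ?_⟩
  obtain ⟨j, hj, hij⟩ := Set.mem_iUnion₂.1 (hcover hi)
  refine ⟨j, hj, ?_⟩
  have hdist : dist (dist i j) 0 < r := by rwa [Real.dist_0_eq_abs, abs_of_nonneg dist_nonneg]
  exact (Real.sqrt_le_sqrt_iff hδ.le).1 ((hHolder i hi j (hts hj)).trans (hrδ hdist).le)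

end Moments

theorem tendsto_sum_mul_nhds_zero {α ι : Type*} {l : Filter α} {s : α → Finset ι}
    {w t : α → ι → ℝ} {B : ℝ} (hw : ∀ n, ∀ i ∈ s n, 0 ≤ w n i)
    (hB : ∀ᶠ n in l, ∑ i ∈ s n, w n i ≤ B) (ht0 : ∀ n, ∀ i ∈ s n, 0 ≤ t n i)
    (ht : ∀ ε > 0, ∀ᶠ n in l, ∀ i ∈ s n, t n i ≤ ε) :
    Tendsto (fun n => ∑ i ∈ s n, w n i * t n i) l (𝓝 0) := by
  rw [Metric.tendsto_nhds]
  intro ε hε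
  have hδ : 0 < ε / (|B| + 1) := by positivity
  filter_upwards [hB, ht _ hδ] with n hBn htn
  have hsum : ∑ i ∈ s n, w n i * t n i ≤ (∑ i ∈ s n, w n i) * (ε / (|B| + 1)) := by
    rw [Finset.sum_mul]
    exact Finset.sum_le_sum fun i hi => mul_le_mul_of_nonneg_left (htn i hi) (hw n i hi)
  rw [Real.dist_0_eq_abs, abs_of_nonneg
    (Finset.sum_nonneg fun i hi => mul_nonneg (hw n i hi) (ht0 n i hi))]
  calc ∑ i ∈ s n, w n i * t n i
      ≤ |B| * (ε / (|B| + 1)) := hsum.trans (by gcongr; exact hBn.trans (le_abs_self B))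
    _ < ε := by
      rw [mul_div_assoc', div_lt_iff₀ (by positivity)]
      linarith

theorem lindeberg_averaging_general
    {Ω : Type*} [MeasurableSpace Ω] (P : Measure Ω)
    (W : ℕ → ℝ → Ω → ℝ)
    (hWmeas : ∀ i u, Measurable (W i u))
    (hWdist : ∀ (i : ℕ) (u : ℝ), 0 ≤ u → u ≤ 1 →
      Measure.map (W i u) P = Measure.map (W 0 u) P)
    (hWint : ∀ u : ℝ, 0 ≤ u → u ≤ 1 → Integrable (fun ω => (W 0 u ω) ^ 2) P)
    (CW ς : ℝ) (hς0 : 0 < ς)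
    (hHolder : ∀ u v : ℝ, 0 ≤ u → u ≤ 1 → 0 ≤ v → v ≤ 1 →
      Real.sqrt (∫ ω, (W 0 u ω - W 0 v ω) ^ 2 ∂P) ≤ CW * |u - v| ^ ς)
    (a : ℕ → ℝ → ℝ) (B : ℝ)
    (hB : ∀ᶠ n : ℕ in Filter.atTop,
      (1 / (n : ℝ)) * ∑ i ∈ Finset.Icc 1 n, |a n ((i : ℝ) / (n : ℝ))| ≤ B)
    (c : ℕ → ℝ) (hc : Filter.Tendsto c Filter.atTop Filter.atTop) :
    Filter.Tendsto (fun n : ℕ =>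
        (1 / (n : ℝ)) * ∑ i ∈ Finset.Icc 1 n, |a n ((i : ℝ) / (n : ℝ))| *
          ∫ ω, (if c n < |W i ((i : ℝ) / (n : ℝ)) ω|
            then (W i ((i : ℝ) / (n : ℝ)) ω) ^ 2 else 0) ∂P)
      Filter.atTop (nhds 0) := by
  have hmem : ∀ {n i : ℕ}, i ∈ Finset.Icc 1 n → (i : ℝ) / n ∈ Set.Icc (0 : ℝ) 1 :=
    fun hi => ⟨by positivity, div_le_one_of_le₀ (by exact_mod_cast (Finset.mem_Icc.1 hi).2)
      (by positivity)⟩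
  have hL2 : ∀ u ∈ Set.Icc (0 : ℝ) 1, MemLp (W 0 u) 2 P := fun u hu =>
    (memLp_two_iff_integrable_sq (hWmeas 0 u).aestronglyMeasurable).2 (hWint u hu.1 hu.2)
  have hunif := fun ε (hε : 0 < ε) => eventually_forall_integral_truncSq_le hL2
    (fun δ hδ => exists_finite_net_of_holder isCompact_Icc hς0
      (fun u hu v hv => by simpa only [Real.dist_eq] using hHolder u v hu.1 hu.2 hv.1 hv.2) hδ) hε
  have hident : ∀ (i : ℕ) (u : ℝ), u ∈ Set.Icc (0 : ℝ) 1 → ∀ c' : ℝ,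
      ∫ ω, truncSq c' (W i u ω) ∂P = ∫ ω, truncSq c' (W 0 u ω) ∂P := fun i u hu c' =>
    (IdentDistrib.comp ⟨(hWmeas i u).aemeasurable, (hWmeas 0 u).aemeasurable,
      hWdist i u hu.1 hu.2⟩ (measurable_truncSq c')).integral_eq
  simp_rw [Finset.mul_sum, ← mul_assoc] at hB ⊢
  refine tendsto_sum_mul_nhds_zero (fun n i _ => by positivity) hB
    (fun n i _ => integral_nonneg fun ω => truncSq_nonneg _ _) fun ε hε => ?_
  filter_upwards [hc.eventually (hunif ε hε)] with n hn i hi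
  exact (hident i _ (hmem hi) (c n)).trans_le (hn _ (hmem hi))

/-- Lindeberg averaging lemma, part (i): if each `W_i(u)` has the same distribution as
`W₀(u)`, the second moments `E[W₀(u)²]^{1/2}` are uniformly bounded on `[0,1]`, `W₀` is
Hölder continuous in `L²` on `[0,1]`, the weights satisfy
`limsup_n (1/n)∑_{i=1}^n |a_n(i/n)| < ∞` (i.e. the averages are eventually bounded by
some `B`), and `c_n → ∞`, then
`(1/n)·∑_{i=1}^n |a_n(i/n)|·E[W_i(i/n)²·1_{|W_i(i/n)| > c_n}] → 0`. -/
theorem lindeberg_averaging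
    {Ω : Type*} [MeasurableSpace Ω] (P : Measure Ω) [IsProbabilityMeasure P]
    (W : ℕ → ℝ → Ω → ℝ)
    (hWmeas : ∀ i u, Measurable (W i u))
    (hWdist : ∀ (i : ℕ) (u : ℝ), 0 ≤ u → u ≤ 1 →
      Measure.map (W i u) P = Measure.map (W 0 u) P)
    (hWint : ∀ u : ℝ, 0 ≤ u → u ≤ 1 → Integrable (fun ω => (W 0 u ω) ^ 2) P)
    (K : ℝ) (hK : ∀ u : ℝ, 0 ≤ u → u ≤ 1 → Real.sqrt (∫ ω, (W 0 u ω) ^ 2 ∂P) ≤ K)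
    (CW ς : ℝ) (hCW : 0 < CW) (hς0 : 0 < ς) (hς1 : ς ≤ 1)
    (hHolder : ∀ u v : ℝ, 0 ≤ u → u ≤ 1 → 0 ≤ v → v ≤ 1 →
      Real.sqrt (∫ ω, (W 0 u ω - W 0 v ω) ^ 2 ∂P) ≤ CW * |u - v| ^ ς)
    (a : ℕ → ℝ → ℝ) (B : ℝ)
    (hB : ∀ᶠ n : ℕ in Filter.atTop,
      (1 / (n : ℝ)) * ∑ i ∈ Finset.Icc 1 n, |a n ((i : ℝ) / (n : ℝ))| ≤ B)
    (c : ℕ → ℝ) (hc : Filter.Tendsto c Filter.atTop Filter.atTop) :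
    Filter.Tendsto (fun n : ℕ =>
        (1 / (n : ℝ)) * ∑ i ∈ Finset.Icc 1 n, |a n ((i : ℝ) / (n : ℝ))| *
          ∫ ω, (if c n < |W i ((i : ℝ) / (n : ℝ)) ω|
            then (W i ((i : ℝ) / (n : ℝ)) ω) ^ 2 else 0) ∂P)
      Filter.atTop (nhds 0) :=
  lindeberg_averaging_general P W hWmeas hWdist hWint CW ς hς0 hHolder a B hB c hc
end
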